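/- arXiv:2503.08964 — 4 statements merged into one kernel-verified Lean document; each statement's English description precedes it below -/
import Mathlib

section
/- For every non-trivial connected graph G on n vertices, the list rainbow connection number satisfies rc^ℓ(G) ≤ n − 1. -/
open SimpleGraph

/-- A colouring of (potential) edges makes `G` rainbow connected if every two vertices are
joined by a path whose edges receive pairwise distinct colours. -/
def IsRainbowConnected {V β : Type*} (G : SimpleGraph V) (c : Sym2 V → β) : Prop :=
  ∀ u v : V, ∃ p : G.Walk u v, p.IsPath ∧ (p.edges.map c).Nodup

/-- Strongly rainbow connected: every two vertices are joined by a rainbow geodesic. -/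
def IsStronglyRainbowConnected {V β : Type*} (G : SimpleGraph V) (c : Sym2 V → β) : Prop :=
  ∀ u v : V, ∃ p : G.Walk u v, p.IsPath ∧ p.length = G.dist u v ∧ (p.edges.map c).Nodup

/-- The rainbow connection number. -/
noncomputable def rc {V : Type*} (G : SimpleGraph V) : ℕ :=
  sInf {r : ℕ | ∃ c : Sym2 V → Fin r, IsRainbowConnected G c}

/-- The strong rainbow connection number. -/
noncomputable def src {V : Type*} (G : SimpleGraph V) : ℕ :=
  sInf {r : ℕ | ∃ c : Sym2 V → Fin r, IsStronglyRainbowConnected G c}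

/-- The list rainbow connection number. -/
noncomputable def rcl {V : Type*} (G : SimpleGraph V) : ℕ :=
  sInf {r : ℕ | ∀ L : Sym2 V → Finset ℕ, (∀ e ∈ G.edgeSet, r ≤ (L e).card) →
    ∃ c : Sym2 V → ℕ, (∀ e ∈ G.edgeSet, c e ∈ L e) ∧ IsRainbowConnected G c}

/-- The list strong rainbow connection number. -/
noncomputable def srcl {V : Type*} (G : SimpleGraph V) : ℕ :=
  sInf {r : ℕ | ∀ L : Sym2 V → Finset ℕ, (∀ e ∈ G.edgeSet, r ≤ (L e).card) →
    ∃ c : Sym2 V → ℕ, (∀ e ∈ G.edgeSet, c e ∈ L e) ∧ IsStronglyRainbowConnected G c}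

/-- The list chromatic number (choice number) of a graph. -/
noncomputable def listChromatic {V : Type*} (H : SimpleGraph V) : ℕ :=
  sInf {r : ℕ | ∀ L : V → Finset ℕ, (∀ v, r ≤ (L v).card) →
    ∃ c : V → ℕ, (∀ v, c v ∈ L v) ∧ ∀ u v, H.Adj u v → c u ≠ c v}

/-- The wheel `W n`: a cycle `C n` together with a universal hub vertex `none`. -/
def wheel (n : ℕ) : SimpleGraph (Option (Fin n)) :=
  SimpleGraph.fromRel (fun x y =>
    (∃ a b, x = some a ∧ y = some b ∧ (cycleGraph n).Adj a b) ∨ (x = none ∧ y ≠ none))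

/-- The Petersen graph as the Kneser graph `K(5,2)`. -/
def petersen : SimpleGraph {s : Finset (Fin 5) // s.card = 2} where
  Adj a b := Disjoint a.1 b.1
  symm := ⟨fun a b h => h.symm⟩
  loopless := ⟨fun a h => by
    have h0 : a.1 = ∅ := disjoint_self.mp h
    have := a.2
    rw [h0] at this
    simp at this⟩

/-- The square of the cycle `C n`: vertices at distance at most 2 are adjacent. -/
def cycleSq (n : ℕ) : SimpleGraph (Fin n) where
  Adj a b := a ≠ b ∧ (cycleGraph n).dist a b ≤ 2
  symm := by
    constructor
    intro a b h
    exact ⟨h.1.symm, by rw [SimpleGraph.dist_comm]; exact h.2⟩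
  loopless := ⟨fun a h => h.1 rfl⟩

-- auxiliary: descending neighbor
lemma exists_parent {V : Type*} {G : SimpleGraph V} (hG : G.Connected) (w0 v : V) (hv : v ≠ w0) :
    ∃ u, G.Adj v u ∧ G.dist u w0 < G.dist v w0 := by
  obtain ⟨p, hp⟩ := (hG v w0).exists_walk_length_eq_dist
  have hpos : 0 < G.dist v w0 := hG.pos_dist_of_ne hv
  cases p with
  | nil => simp at hp; simp at hpos
  | cons h q =>
    refine ⟨_, h, ?_⟩
    have := SimpleGraph.dist_le q
    simp [SimpleGraph.Walk.length_cons] at hp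
    omega

lemma key {V : Type*} [Fintype V] (G : SimpleGraph V) (hG : G.Connected)
    (hn : 2 ≤ Fintype.card V) (L : Sym2 V → Finset ℕ)
    (hL : ∀ e ∈ G.edgeSet, Fintype.card V - 1 ≤ (L e).card) :
    ∃ c : Sym2 V → ℕ, (∀ e ∈ G.edgeSet, c e ∈ L e) ∧
      ∀ u v : V, ∃ p : G.Walk u v, p.IsPath ∧ (p.edges.map c).Nodup := by
  classical
  obtain ⟨w0⟩ := hG.nonempty
  -- parent function
  have hpar : ∀ v : V, v ≠ w0 → ∃ u, G.Adj v u ∧ G.dist u w0 < G.dist v w0 :=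
    fun v hv => exists_parent hG w0 v hv
  choose! f hf1 hf2 using hpar
  set T : Finset (Sym2 V) := (Finset.univ.erase w0).image (fun v => s(v, f v)) with hT
  have hTcard : T.card ≤ Fintype.card V - 1 := by
    calc T.card ≤ (Finset.univ.erase w0).card := Finset.card_image_le
    _ = Fintype.card V - 1 := by rw [Finset.card_erase_of_mem (Finset.mem_univ _), Finset.card_univ]
  have hTedge : ∀ e ∈ T, e ∈ G.edgeSet := by
    intro e he
    simp only [hT, Finset.mem_image, Finset.mem_erase] at he
    obtain ⟨v, ⟨hv, -⟩, rfl⟩ := he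
    exact hf1 v hv
  -- walks to root within T
  have hwalk' : ∀ (d : ℕ) (v : V), G.dist v w0 = d →
      ∃ p : G.Walk v w0, ∀ e ∈ p.edges, e ∈ T := by
    intro d
    induction d using Nat.strong_induction_on with
    | _ d ih =>
      intro v hd
      by_cases hv : v = w0
      · subst hv; exact ⟨SimpleGraph.Walk.nil, by simp⟩
      · have h2 := hf2 v hv
        obtain ⟨q, hq⟩ := ih _ (hd ▸ h2) (f v) rfl
        refine ⟨SimpleGraph.Walk.cons (hf1 v hv) q, ?_⟩
        intro e he
        rw [SimpleGraph.Walk.edges_cons, List.mem_cons] at he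
        rcases he with rfl | he
        · exact Finset.mem_image.mpr ⟨v, Finset.mem_erase.mpr ⟨hv, Finset.mem_univ _⟩, rfl⟩
        · exact hq e he
  have hwalk : ∀ v : V, ∃ p : G.Walk v w0, ∀ e ∈ p.edges, e ∈ T :=
    fun v => hwalk' _ v rfl
  -- Hall: injective transversal on T
  have hall : ∀ s : Finset {e // e ∈ T}, s.card ≤ (s.biUnion (fun e => L e.1)).card := by
    intro s
    rcases s.eq_empty_or_nonempty with rfl | ⟨⟨e, he⟩, hes⟩
    · simp
    · have h1 : (L e) ⊆ s.biUnion (fun e => L e.1) := fun x hx =>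
        Finset.mem_biUnion.mpr ⟨⟨e, he⟩, hes, hx⟩
      have h2 : s.card ≤ T.card := by
        calc s.card ≤ Fintype.card {e // e ∈ T} := Finset.card_le_univ s
        _ = T.card := Fintype.card_coe T
      calc s.card ≤ Fintype.card V - 1 := h2.trans hTcard
      _ ≤ (L e).card := hL e (hTedge e he)
      _ ≤ _ := Finset.card_le_card h1
  obtain ⟨g, hginj, hgmem⟩ :=
    (Finset.all_card_le_biUnion_card_iff_exists_injective (fun e : {e // e ∈ T} => L e.1)).mp hall
  have hLne : ∀ e ∈ G.edgeSet, (L e).Nonempty := by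
    intro e he
    rw [← Finset.card_pos]
    have := hL e he
    omega
  refine ⟨fun e => if h : e ∈ T then g ⟨e, h⟩ else if h2 : e ∈ G.edgeSet then
    (L e).min' (hLne e h2) else 0, ?_, ?_⟩
  · intro e he
    by_cases h : e ∈ T
    · simpa [h] using hgmem ⟨e, h⟩
    · simp only [h, dite_false, he, dite_true]
      exact (L e).min'_mem _
  · intro u v
    obtain ⟨p1, hp1⟩ := hwalk u
    obtain ⟨p2, hp2⟩ := hwalk v
    refine ⟨(p1.append p2.reverse).bypass, SimpleGraph.Walk.bypass_isPath _, ?_⟩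
    have hsub : ∀ e ∈ (p1.append p2.reverse).bypass.edges, e ∈ T := by
      intro e he
      have := SimpleGraph.Walk.edges_bypass_subset _ he
      rw [SimpleGraph.Walk.edges_append, List.mem_append] at this
      rcases this with h | h
      · exact hp1 e h
      · rw [SimpleGraph.Walk.edges_reverse, List.mem_reverse] at h
        exact hp2 e h
    refine List.Nodup.map_on ?_ ((SimpleGraph.Walk.bypass_isPath _).edges_nodup)
    intro e he e' he' heq
    have h1 := hsub e he
    have h2 := hsub e' he'
    simp only [h1, h2, dite_true] at heq
    exact congrArg Subtype.val (hginj heq)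

/-- Theorem: for every non-trivial connected graph on `n` vertices, `rc^ℓ(G) ≤ n - 1`. -/
theorem stmt0 {V : Type*} [Fintype V] (G : SimpleGraph V) (hG : G.Connected)
    (hn : 2 ≤ Fintype.card V) :
    rcl G ≤ Fintype.card V - 1 := by
  apply Nat.sInf_le
  intro L hL
  obtain ⟨c, hc1, hc2⟩ := key G hG hn L hL
  exact ⟨c, hc1, hc2⟩
end

section
/- For a non-trivial connected graph G, we have src^ℓ(G) = e(G) (the number of edges of G) if and only if G is a tree. -/
open SimpleGraph

namespace SRCLaux

open SimpleGraph Walk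

variable {V : Type*} {G : SimpleGraph V}

def wTake {u v : V} : (p : G.Walk u v) → (n : ℕ) → G.Walk u (p.getVert n)
  | .nil, _ => .nil
  | .cons _ _, 0 => .nil
  | .cons h q, n + 1 => .cons h (wTake q n)

def wDrop {u v : V} : (p : G.Walk u v) → (n : ℕ) → G.Walk (p.getVert n) v
  | .nil, _ => .nil
  | .cons h q, 0 => .cons h q
  | .cons _ q, n + 1 => wDrop q n

lemma getVert_wDrop (p : G.Walk u v) (n m : ℕ) :
    (wDrop p n).getVert m = p.getVert (n + m) := by
  induction p generalizing n with
  | nil => simp [wDrop, Walk.getVert]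
  | cons h q ih =>
    cases n with
    | zero => rw [Nat.zero_add]; rfl
    | succ n =>
      rw [Nat.add_right_comm n 1 m]; exact ih n

lemma length_wTake (p : G.Walk u v) (n : ℕ) (h : n ≤ p.length) :
    (wTake p n).length = n := by
  induction p generalizing n with
  | nil => simp at h; simp [h, wTake]
  | cons h' q ih =>
    cases n with
    | zero => rfl
    | succ n =>
      show (wTake q n).length + 1 = n + 1; rw [ih]
      rw [Walk.length_cons] at h
      omega

lemma length_wDrop (p : G.Walk u v) (n : ℕ) :
    (wDrop p n).length = p.length - n := by
  induction p generalizing n with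
  | nil => simp [wDrop]
  | cons h' q ih =>
    cases n with
    | zero => rfl
    | succ n => show (wDrop q n).length = _; rw [ih]; rw [Walk.length_cons]; omega

lemma support_wTake (p : G.Walk u v) (n : ℕ) :
    (wTake p n).support = p.support.take (n + 1) := by
  induction p generalizing n with
  | nil => simp [wTake]
  | cons h' q ih =>
    cases n with
    | zero => simp [wTake]; rfl
    | succ n => show (cons h' (wTake q n)).support = _; rw [Walk.support_cons, ih, Walk.support_cons, List.take_succ_cons]

lemma support_wDrop (p : G.Walk u v) (n : ℕ) (h : n ≤ p.length) :
    (wDrop p n).support = p.support.drop n := by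
  induction p generalizing n with
  | nil => simp at h; simp [h, wDrop]
  | cons h' q ih =>
    cases n with
    | zero => rfl
    | succ n =>
      show (wDrop q n).support = _; rw [ih _ (by rw [Walk.length_cons] at h; omega), Walk.support_cons,
        List.drop_succ_cons]

/-- The slice of the support of a cycle between positions `i < j ≤ length - 1` has no
duplicates, hence the corresponding arc is a path. -/
lemma arc_isPath {a : V} {w : G.Walk a a} (hw : w.IsCycle) {i j : ℕ} (hij : i < j)
    (hj : j ≤ w.length - 1) :
    ((wTake (wDrop w i) (j - i))).IsPath := by
  have hg3 := hw.three_le_length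
  have hil : i ≤ w.length := by omega
  rw [Walk.isPath_def, support_wTake, support_wDrop _ _ hil]
  have ht : w.support.tail.Nodup := hw.support_nodup
  have htl : w.support.tail.length = w.length := by
    have h1 := w.length_support
    rw [w.support_eq_cons, List.length_cons] at h1
    omega
  cases i with
  | succ i =>
    have h4 : w.support.drop (i + 1) = w.support.tail.drop i := by
      have h5 := congrArg (List.drop (i + 1)) w.support_eq_cons
      rwa [List.drop_succ_cons] at h5
    rw [h4]
    exact ((List.take_sublist _ _).trans (List.drop_sublist _ _)).nodup ht
  | zero =>
    simp only [Nat.sub_zero, List.drop_zero]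
    have hja : a ∈ w.support.tail.drop j := by
      have h1 : (wDrop w (j + 1)).support = w.support.drop (j + 1) :=
        support_wDrop _ _ (by omega)
      have h2 : a ∈ (wDrop w (j + 1)).support := Walk.end_mem_support _
      rw [h1] at h2
      have h3 : w.support.drop (j + 1) = w.support.tail.drop j := by
        have h5 := congrArg (List.drop (j + 1)) w.support_eq_cons
        rwa [List.drop_succ_cons] at h5
      rwa [h3] at h2
    rw [w.support_eq_cons, List.take_succ_cons]
    refine List.nodup_cons.mpr ⟨?_, (List.take_sublist _ _).nodup ht⟩
    intro hmem
    have ht' := ht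
    rw [← List.take_append_drop j w.support.tail] at ht'
    exact (List.nodup_append.mp ht').2.2 _ hmem _ hja rfl

lemma getVert_one_of_mem_edges {x y w : V} (q : G.Walk x y) (hq : q.IsPath)
    (h : s(x, w) ∈ q.edges) : q.getVert 1 = w := by
  cases q with
  | nil => simp at h
  | @cons _ q1 _ hadj q' =>
    rw [Walk.edges_cons, List.mem_cons] at h
    rcases h with h | h
    · rw [Sym2.eq_iff] at h
      rcases h with ⟨-, rfl⟩ | ⟨h1, rfl⟩
      · exact Walk.getVert_zero q'
      · exact absurd h1 hadj.ne
    · exact absurd (Walk.fst_mem_support_of_mem_edges q' h)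
        ((Walk.cons_isPath_iff hadj q').mp hq).2

lemma exists_cycle_of_two_paths [DecidableEq V] {x y : V} (P : G.Walk x y) :
    ∀ (Q : G.Walk x y), P.IsPath → Q.IsPath → P ≠ Q →
    ∃ (z : V) (c : G.Walk z z), c.IsCycle ∧ c.length ≤ P.length + Q.length := by
  induction P with
  | nil =>
    intro Q _ hQ hne
    exact absurd ((Walk.isPath_iff_eq_nil).mp hQ).symm hne
  | @cons x p1 y hadj P' ih =>
    intro Q hP hQ hne
    have hP' : P'.IsPath := ((Walk.cons_isPath_iff hadj P').mp hP).1
    have hxP' : x ∉ P'.support := ((Walk.cons_isPath_iff hadj P').mp hP).2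
    by_cases hp1Q : p1 ∈ Q.support
    · -- splice or strip
      cases Q with
      | nil =>
        exfalso
        exact hxP' (P'.end_mem_support)
      | @cons _ q1 _ hadj' Q' =>
        by_cases hq1p1 : q1 = p1
        · subst hq1p1
          have hQ' : Q'.IsPath := ((Walk.cons_isPath_iff hadj' Q').mp hQ).1
          have hne' : P' ≠ Q' := by
            rintro rfl
            exact hne (by rfl)
          obtain ⟨z, c, hc, hlen⟩ := ih Q' hP' hQ' hne'
          exact ⟨z, c, hc, by simp only [Walk.length_cons]; omega⟩
        · -- splice: s(x, p1) ∉ Q.edges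
          set Q := Walk.cons hadj' Q' with hQdef
          have hxp1Q : s(x, p1) ∉ Q.edges := by
            intro hmem
            have := getVert_one_of_mem_edges Q hQ hmem
            rw [hQdef, show (Walk.cons hadj' Q').getVert 1 = q1 from Walk.getVert_zero Q'] at this
            exact hq1p1 this
          have hQA : (Q.takeUntil p1 hp1Q).IsPath := hQ.takeUntil hp1Q
          refine ⟨x, Walk.cons hadj (Q.takeUntil p1 hp1Q).reverse, ?_, ?_⟩
          · constructor
            · constructor
              · constructor
                rw [Walk.edges_cons]
                refine List.nodup_cons.mpr ⟨?_, hQA.reverse.edges_nodup⟩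
                rw [Walk.edges_reverse, List.mem_reverse]
                exact fun hc => hxp1Q (Walk.edges_takeUntil_subset Q hp1Q hc)
              · exact fun hc => by simp at hc
            · rw [Walk.support_cons, List.tail_cons]
              exact hQA.reverse.support_nodup
          · rw [Walk.length_cons, Walk.length_reverse]
            have := Walk.length_takeUntil_le Q hp1Q
            simp only [Walk.length_cons]
            omega
    · -- extend Q
      have hQ2 : (Walk.cons hadj.symm Q).IsPath :=
        (Walk.cons_isPath_iff hadj.symm Q).mpr ⟨hQ, hp1Q⟩
      have hne2 : P' ≠ Walk.cons hadj.symm Q := by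
        intro hEq
        apply hxP'
        rw [hEq, Walk.support_cons]
        exact List.mem_cons_of_mem _ Q.start_mem_support
      obtain ⟨z, c, hc, hlen⟩ := ih (Walk.cons hadj.symm Q) hP' hQ2 hne2
      exact ⟨z, c, hc, by simp only [Walk.length_cons] at hlen ⊢; omega⟩


lemma dist_getVert_cycle [DecidableEq V] {a : V} {w : G.Walk a a} (hw : w.IsCycle)
    (hmin : ∀ (b : V) (c : G.Walk b b), c.IsCycle → w.length ≤ c.length)
    {i j : ℕ} (hij : i < j) (hj : j ≤ w.length - 1) :
    G.dist (w.getVert i) (w.getVert j) = min (j - i) (w.length - (j - i)) := by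
  have hg3 := hw.three_le_length
  -- the arc from i to j
  have harc : (wDrop w i).getVert (j - i) = w.getVert j := by
    rw [getVert_wDrop]
    congr 1
    omega
  set arc := (wTake (wDrop w i) (j - i)).copy rfl harc with harcdef
  have harclen : arc.length = j - i := by
    rw [harcdef, Walk.length_copy]
    exact length_wTake _ _ (by rw [length_wDrop]; omega)
  have harcpath : arc.IsPath := by
    rw [harcdef, Walk.isPath_copy]
    exact arc_isPath hw hij hj
  -- upper bound 1
  have hub1 : G.dist (w.getVert i) (w.getVert j) ≤ j - i := by
    have := SimpleGraph.dist_le arc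
    omega
  -- upper bound 2 : around the other side
  have hub2 : G.dist (w.getVert i) (w.getVert j) ≤ w.length - (j - i) := by
    have h2 := SimpleGraph.dist_le ((wDrop w j).append (wTake w i))
    rw [Walk.length_append, length_wDrop, length_wTake _ _ (by omega)] at h2
    rw [SimpleGraph.dist_comm]
    omega
  -- lower bound
  refine le_antisymm (le_min hub1 hub2) ?_
  by_contra hlt
  push_neg at hlt
  obtain ⟨P, hP, hPlen⟩ := Reachable.exists_path_of_dist arc.reachable
  have hne : P ≠ arc := by
    intro hEq
    rw [hEq] at hPlen
    omega
  obtain ⟨z, c, hc, hclen⟩ := exists_cycle_of_two_paths P arc hP harcpath hne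
  have := hmin z c hc
  have hd := hPlen
  omega

lemma geodesic_split [DecidableEq V] (hG : G.Connected) {u v z : V} {p : G.Walk u v}
    (hp : p.IsPath) (hl : p.length = G.dist u v) (hz : z ∈ p.support) :
    (p.takeUntil z hz).length = G.dist u z ∧ (p.dropUntil z hz).length = G.dist z v ∧
      G.dist u z + G.dist z v = G.dist u v := by
  have hsum : (p.takeUntil z hz).length + (p.dropUntil z hz).length = p.length := by
    have := congrArg Walk.length (p.take_spec hz)
    rwa [Walk.length_append] at this
  have h1 := SimpleGraph.dist_le (p.takeUntil z hz)
  have h2 := SimpleGraph.dist_le (p.dropUntil z hz)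
  have h3 := hG.dist_triangle (u := u) (v := z) (w := v)
  omega

lemma geodesic_potential [DecidableEq V] (hG : G.Connected) {u v z z' : V} {p : G.Walk u v}
    (hp : p.IsPath) (hl : p.length = G.dist u v) (hz : z ∈ p.support) (hz' : z' ∈ p.support) :
    G.dist u z + G.dist z z' = G.dist u z' ∨ G.dist u z' + G.dist z' z = G.dist u z := by
  obtain ⟨ht1, hd1, hsum1⟩ := geodesic_split hG hp hl hz
  have hz'2 : z' ∈ ((p.takeUntil z hz).append (p.dropUntil z hz)).support := by
    rw [p.take_spec hz]; exact hz'
  rw [Walk.mem_support_append_iff] at hz'2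
  rcases hz'2 with hz'2 | hz'2
  · -- z' on the first segment : geodesic from u to z
    right
    exact (geodesic_split hG (hp.takeUntil hz) ht1 hz'2).2.2
  · -- z' on the second segment : geodesic from z to v
    left
    have hd2 : (p.dropUntil z hz).length = G.dist z v := hd1
    have hsplit2 := (geodesic_split hG (hp.dropUntil hz) hd2 hz'2).2.2
    obtain ⟨-, -, hsum3⟩ := geodesic_split hG hp hl hz'
    omega


lemma exists_bad_pair [DecidableEq V] (hG : G.Connected) (hnac : ¬G.IsAcyclic) :
    ∃ e f : Sym2 V, e ∈ G.edgeSet ∧ f ∈ G.edgeSet ∧ e ≠ f ∧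
      ∀ (u v : V) (p : G.Walk u v), p.IsPath → p.length = G.dist u v →
        ¬(e ∈ p.edges ∧ f ∈ p.edges) := by
  classical
  have hex : ∃ n, ∃ (b : V) (c : G.Walk b b), c.IsCycle ∧ c.length = n := by
    simp only [SimpleGraph.IsAcyclic, not_forall, not_not] at hnac
    obtain ⟨b, c, hc⟩ := hnac
    exact ⟨c.length, b, c, hc, rfl⟩
  obtain ⟨a, w, hw, hwg⟩ := Nat.find_spec hex
  have hmin : ∀ (b : V) (c : G.Walk b b), c.IsCycle → w.length ≤ c.length := by
    intro b c hc
    rw [hwg]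
    exact Nat.find_min' hex ⟨b, c, hc, rfl⟩
  clear hwg
  set g := w.length with hg
  set k := g / 2 with hk
  have hg3 : 3 ≤ g := hw.three_le_length
  have hk1 : 1 ≤ k := by omega
  have hkg : k + 1 ≤ g - 1 := by omega
  -- the six distances
  have d01 : G.dist (w.getVert 0) (w.getVert 1) = 1 := by
    have := dist_getVert_cycle hw hmin (i := 0) (j := 1) (by omega) (by omega)
    omega
  have dkk : G.dist (w.getVert k) (w.getVert (k + 1)) = 1 := by
    have := dist_getVert_cycle hw hmin (i := k) (j := k + 1) (by omega) (by omega)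
    omega
  have d0k : G.dist (w.getVert 0) (w.getVert k) = k := by
    have := dist_getVert_cycle hw hmin (i := 0) (j := k) (by omega) (by omega)
    omega
  have d0k1 : 1 ≤ G.dist (w.getVert 0) (w.getVert (k + 1)) ∧
      G.dist (w.getVert 0) (w.getVert (k + 1)) ≤ k := by
    have := dist_getVert_cycle hw hmin (i := 0) (j := k + 1) (by omega) (by omega)
    omega
  have d1k : G.dist (w.getVert 1) (w.getVert k) = k - 1 := by
    rcases Nat.lt_or_ge 1 k with hlt | hle
    · have := dist_getVert_cycle hw hmin (i := 1) (j := k) (by omega) (by omega)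
      omega
    · have hk1' : k = 1 := by omega
      rw [hk1']
      simp [SimpleGraph.dist_self]
  have d1k1 : G.dist (w.getVert 1) (w.getVert (k + 1)) = k := by
    have := dist_getVert_cycle hw hmin (i := 1) (j := k + 1) (by omega) (by omega)
    omega
  refine ⟨s(w.getVert 0, w.getVert 1), s(w.getVert k, w.getVert (k + 1)), ?_, ?_, ?_, ?_⟩
  · exact (G.mem_edgeSet).mpr (w.adj_getVert_succ (by omega))
  · exact (G.mem_edgeSet).mpr (w.adj_getVert_succ (by omega))
  · intro hEq
    rw [Sym2.eq_iff] at hEq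
    rcases hEq with ⟨h1, -⟩ | ⟨h1, -⟩
    · rw [h1, SimpleGraph.dist_self] at d0k
      omega
    · rw [h1, SimpleGraph.dist_self] at d0k1
      omega
  · rintro u v p hp hl ⟨he, hf⟩
    have hA : w.getVert 0 ∈ p.support := p.fst_mem_support_of_mem_edges he
    have hB : w.getVert 1 ∈ p.support := p.snd_mem_support_of_mem_edges he
    have hC : w.getVert k ∈ p.support := p.fst_mem_support_of_mem_edges hf
    have hD : w.getVert (k + 1) ∈ p.support := p.snd_mem_support_of_mem_edges hf
    have c01 := SimpleGraph.dist_comm (G := G) (u := w.getVert 0) (v := w.getVert 1)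
    have ckk := SimpleGraph.dist_comm (G := G) (u := w.getVert k) (v := w.getVert (k + 1))
    have c0k := SimpleGraph.dist_comm (G := G) (u := w.getVert 0) (v := w.getVert k)
    have c0k1 := SimpleGraph.dist_comm (G := G) (u := w.getVert 0) (v := w.getVert (k + 1))
    have c1k := SimpleGraph.dist_comm (G := G) (u := w.getVert 1) (v := w.getVert k)
    have c1k1 := SimpleGraph.dist_comm (G := G) (u := w.getVert 1) (v := w.getVert (k + 1))
    have P01 := geodesic_potential hG hp hl hA hB
    have Pkk := geodesic_potential hG hp hl hC hD
    have P0k := geodesic_potential hG hp hl hA hC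
    have P0k1 := geodesic_potential hG hp hl hA hD
    have P1k := geodesic_potential hG hp hl hB hC
    have P1k1 := geodesic_potential hG hp hl hB hD
    rcases P01 with h1 | h1 <;> rcases Pkk with h2 | h2 <;> rcases P0k with h3 | h3 <;>
      rcases P0k1 with h4 | h4 <;> rcases P1k with h5 | h5 <;> rcases P1k1 with h6 | h6 <;>
      omega


lemma tree_path_unique (hac : G.IsAcyclic) {u v : V} {p q : G.Walk u v}
    (hp : p.IsPath) (hq : q.IsPath) : p = q := by
  have := hac.path_unique ⟨p, hp⟩ ⟨q, hq⟩
  simpa using congrArg Subtype.val this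

lemma tree_path_length (hT : G.IsTree) {u v : V} {p : G.Walk u v} (hp : p.IsPath) :
    p.length = G.dist u v := by
  obtain ⟨q, hq, hql⟩ := hT.isConnected.exists_path_of_dist u v
  rw [tree_path_unique hT.IsAcyclic hp hq]
  exact hql

lemma tree_dist_succ (hT : G.IsTree) {a b : V} (hadj : G.Adj a b) (t : V) :
    G.dist a t + 1 = G.dist b t ∨ G.dist b t + 1 = G.dist a t := by
  classical
  obtain ⟨Pb, hPb, hPbl⟩ := hT.isConnected.exists_path_of_dist b t
  by_cases ha : a ∈ Pb.support
  · left
    obtain ⟨-, -, hsum⟩ := geodesic_split hT.isConnected hPb hPbl ha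
    have hba : G.dist b a = 1 := (SimpleGraph.dist_eq_one_iff_adj).mpr hadj.symm
    omega
  · right
    have hq : (Walk.cons hadj Pb).IsPath := (Walk.cons_isPath_iff hadj Pb).mpr ⟨hPb, ha⟩
    have := tree_path_length hT hq
    rw [Walk.length_cons] at this
    omega

lemma path_through_edge [DecidableEq V] (hG : G.Connected) {a b t : V} (hadj : G.Adj a b)
    (hlt : G.dist b t < G.dist a t) :
    ∃ q : G.Walk a t, q.IsPath ∧ s(a, b) ∈ q.edges := by
  obtain ⟨Pb, hPb, hPbl⟩ := hG.exists_path_of_dist b t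
  by_cases ha : a ∈ Pb.support
  · exfalso
    obtain ⟨-, -, hsum⟩ := geodesic_split hG hPb hPbl ha
    have hba : G.dist b a = 1 := (SimpleGraph.dist_eq_one_iff_adj).mpr hadj.symm
    omega
  · exact ⟨Walk.cons hadj Pb, (Walk.cons_isPath_iff hadj Pb).mpr ⟨hPb, ha⟩,
      by rw [Walk.edges_cons]; exact List.mem_cons_self⟩

lemma tree_pair_aux (hT : G.IsTree) {a b x y : V} (hab : G.Adj a b) (hxy : G.Adj x y)
    (h1 : G.dist b x ≤ G.dist a x) (h2 : G.dist a y ≤ G.dist a x) :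
    ∃ (u v : V) (q : G.Walk u v), q.IsPath ∧ s(a, b) ∈ q.edges ∧ s(x, y) ∈ q.edges := by
  classical
  have hG := hT.isConnected
  have hs1 := tree_dist_succ hT hab x
  have hbx : G.dist b x < G.dist a x := by omega
  obtain ⟨q, hq, he⟩ := path_through_edge hG hab hbx
  have hs2 := tree_dist_succ hT hxy a
  have hya : G.dist y a < G.dist x a := by
    have e1 : G.dist y a = G.dist a y := SimpleGraph.dist_comm
    have e2 : G.dist x a = G.dist a x := SimpleGraph.dist_comm
    omega
  obtain ⟨q', hq', hf⟩ := path_through_edge hG hxy hya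
  have hqq : q = q'.reverse := tree_path_unique hT.IsAcyclic hq hq'.reverse
  exact ⟨a, x, q, hq, he, by
    rw [hqq, Walk.edges_reverse, List.mem_reverse]; exact hf⟩

lemma tree_edges_on_common_path (hT : G.IsTree) {e f : Sym2 V}
    (he : e ∈ G.edgeSet) (hf : f ∈ G.edgeSet) :
    ∃ (u v : V) (q : G.Walk u v), q.IsPath ∧ e ∈ q.edges ∧ f ∈ q.edges := by
  induction' e with a b
  induction' f with x y
  rw [SimpleGraph.mem_edgeSet] at he hf
  have swab : s(a, b) = s(b, a) := Sym2.eq_swap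
  have swxy : s(x, y) = s(y, x) := Sym2.eq_swap
  rcases le_total (G.dist a x) (G.dist a y) with h1 | h1 <;>
    rcases le_total (G.dist b x) (G.dist b y) with h2 | h2
  · rcases le_total (G.dist b y) (G.dist a y) with h3 | h3
    · obtain ⟨u, v, q, hq, hA, hB⟩ := tree_pair_aux hT he hf.symm h3 h1
      exact ⟨u, v, q, hq, hA, by rw [swxy]; exact hB⟩
    · obtain ⟨u, v, q, hq, hA, hB⟩ := tree_pair_aux hT he.symm hf.symm h3 h2
      exact ⟨u, v, q, hq, by rw [swab]; exact hA, by rw [swxy]; exact hB⟩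
  · rcases le_total (G.dist b x) (G.dist a y) with h3 | h3
    · obtain ⟨u, v, q, hq, hA, hB⟩ := tree_pair_aux hT he hf.symm (le_trans h2 h3) h1
      exact ⟨u, v, q, hq, hA, by rw [swxy]; exact hB⟩
    · obtain ⟨u, v, q, hq, hA, hB⟩ := tree_pair_aux hT he.symm hf (le_trans h1 h3) h2
      exact ⟨u, v, q, hq, by rw [swab]; exact hA, hB⟩
  · rcases le_total (G.dist a x) (G.dist b y) with h3 | h3
    · obtain ⟨u, v, q, hq, hA, hB⟩ := tree_pair_aux hT he.symm hf.symm (le_trans h1 h3) h2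
      exact ⟨u, v, q, hq, by rw [swab]; exact hA, by rw [swxy]; exact hB⟩
    · obtain ⟨u, v, q, hq, hA, hB⟩ := tree_pair_aux hT he hf (le_trans h2 h3) h1
      exact ⟨u, v, q, hq, hA, hB⟩
  · rcases le_total (G.dist a x) (G.dist b x) with h3 | h3
    · obtain ⟨u, v, q, hq, hA, hB⟩ := tree_pair_aux hT he.symm hf h3 h2
      exact ⟨u, v, q, hq, by rw [swab]; exact hA, hB⟩
    · obtain ⟨u, v, q, hq, hA, hB⟩ := tree_pair_aux hT he hf h3 h1
      exact ⟨u, v, q, hq, hA, hB⟩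


lemma hall_extract {F : Finset (Sym2 V)} {L : Sym2 V → Finset ℕ} [DecidableEq V]
    (hHall : ∀ s : Finset {x // x ∈ F}, s.card ≤ (s.biUnion fun x => L x.1).card) :
    ∃ c : Sym2 V → ℕ, (∀ x ∈ F, c x ∈ L x) ∧ Set.InjOn c ↑F := by
  classical
  obtain ⟨c0, hc0inj, hc0m⟩ :=
    (Finset.all_card_le_biUnion_card_iff_exists_injective fun x : {x // x ∈ F} => L x.1).mp hHall
  refine ⟨fun x => if h : x ∈ F then c0 ⟨x, h⟩ else 0, fun x hx => by simpa [hx] using hc0m ⟨x, hx⟩,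
    ?_⟩
  intro x hx y hy hxy
  rw [Finset.mem_coe] at hx hy
  simp only at hxy
  rw [dif_pos hx, dif_pos hy] at hxy
  simpa using congrArg Subtype.val (hc0inj hxy)

lemma hall_full [DecidableEq V] {F : Finset (Sym2 V)} {L : Sym2 V → Finset ℕ}
    (hL : ∀ x ∈ F, F.card ≤ (L x).card) :
    ∃ c : Sym2 V → ℕ, (∀ x ∈ F, c x ∈ L x) ∧ Set.InjOn c ↑F := by
  classical
  refine hall_extract (fun s => ?_)
  rcases s.eq_empty_or_nonempty with rfl | ⟨x, hx⟩
  · simp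
  · calc s.card ≤ Fintype.card {x // x ∈ F} := Finset.card_le_univ s
      _ = F.card := Fintype.card_coe F
      _ ≤ (L x.1).card := hL x.1 x.2
      _ ≤ _ := Finset.card_le_card (Finset.subset_biUnion_of_mem (fun x : {x // x ∈ F} => L x.1) hx)

lemma hall_or [DecidableEq V] {F : Finset (Sym2 V)} {L : Sym2 V → Finset ℕ} {e f : Sym2 V}
    (he : e ∈ F) (hf : f ∈ F) (hef : e ≠ f) (hL : ∀ x ∈ F, F.card - 1 ≤ (L x).card) :
    ∃ c : Sym2 V → ℕ, (∀ x ∈ F, c x ∈ L x) ∧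
      (Set.InjOn c ↑F ∨ (Set.InjOn c ↑(F.erase f) ∧ c f = c e)) := by
  classical
  by_cases hHall : ∀ s : Finset {x // x ∈ F}, s.card ≤ (s.biUnion fun x => L x.1).card
  · obtain ⟨c, hcm, hcinj⟩ := hall_extract hHall
    exact ⟨c, hcm, Or.inl hcinj⟩
  · push_neg at hHall
    obtain ⟨s, hs⟩ := hHall
    -- s must be everything
    have hsne : s.Nonempty := Finset.card_pos.mp (by omega)
    obtain ⟨x1, hx1⟩ := hsne
    have hsub1 : L x1.1 ⊆ s.biUnion fun x => L x.1 :=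
      Finset.subset_biUnion_of_mem (fun x : {x // x ∈ F} => L x.1) hx1
    have hcard1 : F.card - 1 ≤ (s.biUnion fun x => L x.1).card :=
      le_trans (hL x1.1 x1.2) (Finset.card_le_card hsub1)
    have hsF : s.card ≤ F.card := le_of_le_of_eq (Finset.card_le_univ s) (Fintype.card_coe F)
    have hFc : Fintype.card {x // x ∈ F} = F.card := Fintype.card_coe F
    have hseq : s = Finset.univ := Finset.eq_univ_of_card s (by omega)
    subst hseq
    -- all lists are equal to the union U
    set U := (Finset.univ : Finset {x // x ∈ F}).biUnion fun x => L x.1 with hU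
    have hLeq : ∀ x (hx : x ∈ F), L x = U := by
      intro x hx
      refine Finset.eq_of_subset_of_card_le ?_ ?_
      · exact Finset.subset_biUnion_of_mem (fun x : {x // x ∈ F} => L x.1)
          (Finset.mem_univ ⟨x, hx⟩)
      · have := hL x hx
        omega
    -- SDR on `F.erase f`
    have he' : e ∈ F.erase f := Finset.mem_erase.mpr ⟨hef, he⟩
    obtain ⟨c0, hc0m, hc0inj⟩ := hall_full (F := F.erase f) (L := L) (fun x hx => by
      rw [Finset.card_erase_of_mem hf]
      exact hL x (Finset.mem_of_mem_erase hx))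
    refine ⟨fun x => if x = f then c0 e else c0 x, ?_, Or.inr ⟨?_, ?_⟩⟩
    · intro x hx
      by_cases hxf : x = f
      · subst hxf
        have h1 : c0 e ∈ L e := hc0m e he'
        simp only [if_pos]
        rwa [hLeq e he, ← hLeq x hf] at h1
      · simpa [hxf] using hc0m x (Finset.mem_erase.mpr ⟨hxf, hx⟩)
    · intro x hx y hy hxy
      rw [Finset.mem_coe, Finset.mem_erase] at hx hy
      simp only at hxy
      rw [if_neg hx.1, if_neg hy.1] at hxy
      exact hc0inj (Finset.mem_coe.mpr (Finset.mem_erase.mpr hx))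
        (Finset.mem_coe.mpr (Finset.mem_erase.mpr hy)) hxy
    · simp [hef]

lemma nodup_map_of_coloring {F : Finset (Sym2 V)} [DecidableEq V] {c : Sym2 V → ℕ}
    {e f : Sym2 V} (he : e ∈ F) (hef : e ≠ f)
    (hc : Set.InjOn c ↑F ∨ (Set.InjOn c ↑(F.erase f) ∧ c f = c e))
    {l : List (Sym2 V)} (hl : l.Nodup) (hlF : ∀ x ∈ l, x ∈ F)
    (hnot : ¬(e ∈ l ∧ f ∈ l)) : (l.map c).Nodup := by
  refine hl.map_on ?_
  intro x hx y hy hxy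
  rcases hc with hinj | ⟨hinj, hfe⟩
  · exact hinj (Finset.mem_coe.mpr (hlF x hx)) (Finset.mem_coe.mpr (hlF y hy)) hxy
  · have he' : e ∈ F.erase f := Finset.mem_erase.mpr ⟨hef, he⟩
    have key : ∀ z ∈ l, z ≠ f → f ∈ l → c f = c z → False := by
      intro z hz hzf hfl hcz
      have hze : z ∈ F.erase f := Finset.mem_erase.mpr ⟨hzf, hlF z hz⟩
      have : e = z := hinj (Finset.mem_coe.mpr he') (Finset.mem_coe.mpr hze)
        (hfe.symm.trans hcz)
      subst this
      exact hnot ⟨hz, hfl⟩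
    by_cases hxf : x = f
    · by_cases hyf : y = f
      · rw [hxf, hyf]
      · subst hxf
        exact absurd (key y hy hyf hx hxy) not_false
    · by_cases hyf : y = f
      · subst hyf
        exact absurd (key x hx hxf hy hxy.symm) not_false
      · exact hinj (Finset.mem_coe.mpr (Finset.mem_erase.mpr ⟨hxf, hlF x hx⟩))
          (Finset.mem_coe.mpr (Finset.mem_erase.mpr ⟨hyf, hlF y hy⟩)) hxy

lemma edgeSet_nonempty_of_connected [Nontrivial V] (hG : G.Connected) : G.edgeSet.Nonempty := by
  obtain ⟨u, v, huv⟩ := exists_pair_ne V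
  obtain ⟨p⟩ := hG.preconnected u v
  cases p with
  | nil => exact absurd rfl huv
  | cons h q => exact ⟨_, (G.mem_edgeSet).mpr h⟩

lemma isSRC_of_injOn (hG : G.Connected) {c : Sym2 V → ℕ} (hc : Set.InjOn c G.edgeSet) :
    IsStronglyRainbowConnected G c := by
  intro u v
  obtain ⟨p, hp, hl⟩ := hG.exists_path_of_dist u v
  refine ⟨p, hp, hl, hp.edges_nodup.map_on ?_⟩
  intro x hx y hy hxy
  exact hc (p.edges_subset_edgeSet hx) (p.edges_subset_edgeSet hy) hxy

lemma card_mem_srcl_set [Fintype V] (hG : G.Connected) :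
    ∀ L : Sym2 V → Finset ℕ, (∀ e ∈ G.edgeSet, G.edgeSet.ncard ≤ (L e).card) →
      ∃ c : Sym2 V → ℕ, (∀ e ∈ G.edgeSet, c e ∈ L e) ∧ IsStronglyRainbowConnected G c := by
  classical
  intro L hL
  set F := (Set.toFinite G.edgeSet).toFinset with hF
  have hFcoe : ↑F = G.edgeSet := Set.Finite.coe_toFinset _
  have hFcard : F.card = G.edgeSet.ncard := (Set.ncard_eq_toFinset_card _ _).symm
  obtain ⟨c, hcm, hcinj⟩ := hall_full (F := F) (L := L) (fun x hx => by
    rw [hFcard]; exact hL x ((Set.Finite.mem_toFinset _).mp hx))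
  refine ⟨c, fun e he => hcm e ((Set.Finite.mem_toFinset _).mpr he), isSRC_of_injOn hG ?_⟩
  rwa [hFcoe] at hcinj

lemma nontree_mem_srcl_set [Fintype V] (hG : G.Connected) (hnT : ¬G.IsTree) :
    ∀ L : Sym2 V → Finset ℕ, (∀ e ∈ G.edgeSet, G.edgeSet.ncard - 1 ≤ (L e).card) →
      ∃ c : Sym2 V → ℕ, (∀ e ∈ G.edgeSet, c e ∈ L e) ∧ IsStronglyRainbowConnected G c := by
  classical
  intro L hL
  have hnac : ¬G.IsAcyclic := fun h => hnT ⟨hG, h⟩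
  obtain ⟨e, f, he, hf, hef, hbad⟩ := exists_bad_pair hG hnac
  set F := (Set.toFinite G.edgeSet).toFinset with hF
  have hFcard : F.card = G.edgeSet.ncard := (Set.ncard_eq_toFinset_card _ _).symm
  have hmem : ∀ x, x ∈ F ↔ x ∈ G.edgeSet := fun x => Set.Finite.mem_toFinset _
  obtain ⟨c, hcm, hcor⟩ := hall_or (F := F) (L := L) ((hmem e).mpr he) ((hmem f).mpr hf) hef
    (fun x hx => by rw [hFcard]; exact hL x ((hmem x).mp hx))
  refine ⟨c, fun x hx => hcm x ((hmem x).mpr hx), ?_⟩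
  intro u v
  obtain ⟨p, hp, hl⟩ := hG.exists_path_of_dist u v
  refine ⟨p, hp, hl, ?_⟩
  exact nodup_map_of_coloring ((hmem e).mpr he) hef hcor hp.edges_nodup
    (fun x hx => (hmem x).mpr (p.edges_subset_edgeSet hx)) (hbad u v p hp hl)

lemma tree_lower [Fintype V] [Nontrivial V] (hG : G.Connected) (hT : G.IsTree) {r : ℕ}
    (hr : r < G.edgeSet.ncard)
    (hmem : ∀ L : Sym2 V → Finset ℕ, (∀ e ∈ G.edgeSet, r ≤ (L e).card) →
      ∃ c : Sym2 V → ℕ, (∀ e ∈ G.edgeSet, c e ∈ L e) ∧ IsStronglyRainbowConnected G c) :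
    False := by
  classical
  set m := G.edgeSet.ncard with hm
  have hm1 : 1 ≤ m := by
    rw [hm]
    exact (Set.ncard_pos (Set.toFinite _)).mpr (edgeSet_nonempty_of_connected hG)
  obtain ⟨c, hcm, hrc⟩ := hmem (fun _ => Finset.range (m - 1)) (fun e he => by
    rw [Finset.card_range]; omega)
  set F := (Set.toFinite G.edgeSet).toFinset with hF
  have hFcard : F.card = m := (Set.ncard_eq_toFinset_card _ _).symm
  have hmemF : ∀ x, x ∈ F ↔ x ∈ G.edgeSet := fun x => Set.Finite.mem_toFinset _
  obtain ⟨e, heF, f, hfF, hef, hcef⟩ :=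
    Finset.exists_ne_map_eq_of_card_lt_of_maps_to (s := F) (t := Finset.range (m - 1)) (f := c)
      (by rw [hFcard, Finset.card_range]; omega)
      (fun a ha => hcm a ((hmemF a).mp ha))
  obtain ⟨u, v, q, hq, heq, hfq⟩ := tree_edges_on_common_path hT ((hmemF e).mp heF)
    ((hmemF f).mp hfF)
  obtain ⟨p, hp, hpl, hnd⟩ := hrc u v
  have hpq : p = q := tree_path_unique hT.IsAcyclic hp hq
  subst hpq
  exact hef (List.inj_on_of_nodup_map hnd heq hfq hcef)

end SRCLaux

/-- Theorem: for a non-trivial connected graph, `src^ℓ(G) = e(G)` iff `G` is a tree. -/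
theorem stmt5 {V : Type*} [Fintype V] [Nontrivial V] (G : SimpleGraph V) (hG : G.Connected) :
    srcl G = G.edgeSet.ncard ↔ G.IsTree := by
  classical
  have hm1 : 1 ≤ G.edgeSet.ncard := by
    exact (Set.ncard_pos (Set.toFinite _)).mpr (SRCLaux.edgeSet_nonempty_of_connected hG)
  constructor
  · intro h
    by_contra hnT
    have h1 : srcl G ≤ G.edgeSet.ncard - 1 := by
      unfold srcl at *
      exact Nat.sInf_le (SRCLaux.nontree_mem_srcl_set hG hnT)
    omega
  · intro hT
    unfold srcl
    refine le_antisymm (Nat.sInf_le (SRCLaux.card_mem_srcl_set hG)) ?_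
    refine le_csInf ⟨_, SRCLaux.card_mem_srcl_set hG⟩ ?_
    intro b hb
    by_contra hlt
    push_neg at hlt
    exact SRCLaux.tree_lower hG hT hlt hb
end

section
/- Let G be a non-complete graph with a universal vertex v such that G − v has one or two components. Then 2 ≤ rc(G) ≤ rc^ℓ(G) ≤ 3. -/
open SimpleGraph

section AuxRainbow


lemma sdr_aux {α : Type*} [Finite α] (F : α → Finset ℕ)
    (h : ∀ i, Nat.card α ≤ (F i).card) :
    ∃ f : α → ℕ, (∀ i, f i ∈ F i) ∧ Function.Injective f := by
  classical
  have : Fintype α := Fintype.ofFinite α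
  have key : ∀ s : Finset α, ∃ f : α → ℕ, (∀ i ∈ s, f i ∈ F i) ∧ Set.InjOn f ↑s := by
    intro s
    induction s using Finset.induction_on with
    | empty => exact ⟨fun _ => 0, by simp, by simp⟩
    | @insert a s ha ih =>
      obtain ⟨f, hf1, hf2⟩ := ih
      have hcard : s.card < (F a).card := by
        have : s.card < Fintype.card α := by
          have hne : s ≠ Finset.univ := fun hs => ha (by rw [hs]; exact Finset.mem_univ a)
          have := Finset.card_lt_card (Finset.ssubset_univ_iff.mpr hne)
          simpa using this
        have h2 := h a
        rw [Nat.card_eq_fintype_card] at h2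
        omega
      have : ¬ F a ⊆ s.image f := by
        intro hsub
        have := Finset.card_le_card hsub
        have := Finset.card_image_le (s := s) (f := f)
        omega
      obtain ⟨x, hx, hx2⟩ := Finset.not_subset.mp this
      refine ⟨Function.update f a x, ?_, ?_⟩
      · intro i hi
        rcases Finset.mem_insert.mp hi with rfl | hi
        · simp [hx]
        · rw [Function.update_of_ne (fun hia => ha (by rwa [hia] at hi))]
          exact hf1 i hi
      · intro i hi j hj hij
        simp only [Finset.coe_insert, Set.mem_insert_iff, Finset.mem_coe] at hi hj
        rcases hi with rfl | hi <;> rcases hj with rfl | hj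
        · rfl
        · rw [Function.update_self, Function.update_of_ne (fun hja => ha (by rwa [hja] at hj))] at hij
          exact absurd (hij ▸ Finset.mem_image_of_mem f hj) hx2
        · rw [Function.update_self, Function.update_of_ne (fun hia => ha (by rwa [hia] at hi))] at hij
          exact absurd (hij ▸ Finset.mem_image_of_mem f hi) hx2
        · rw [Function.update_of_ne (fun hia => ha (by rwa [hia] at hi)),
            Function.update_of_ne (fun hja => ha (by rwa [hja] at hj))] at hij
          exact hf2 hi hj hij
  obtain ⟨f, hf1, hf2⟩ := key Finset.univ
  exact ⟨f, fun i => hf1 i (Finset.mem_univ i), fun i j hij =>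
    hf2 (by simp) (by simp) hij⟩

lemma forest_coloring {V : Type*} [Fintype V] (P : V → V) (rank : V → ℕ)
    (hP : ∀ u, rank u ≠ 0 → rank (P u) < rank u)
    (F : V → Finset ℕ) (hF1 : ∀ u, (F u).Nonempty)
    (hF2 : ∀ u, rank u ≠ 0 → 2 ≤ (F u).card) :
    ∃ a : V → ℕ, (∀ u, a u ∈ F u) ∧ ∀ u, rank u ≠ 0 → a u ≠ a (P u) := by
  classical
  have key : ∀ n : ℕ, ∃ a : V → ℕ, (∀ u, a u ∈ F u) ∧
      ∀ u, rank u ≠ 0 → rank u ≤ n → a u ≠ a (P u) := by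
    intro n
    induction n with
    | zero =>
      exact ⟨fun u => (hF1 u).choose, fun u => (hF1 u).choose_spec,
        fun u h1 h2 => absurd (Nat.le_zero.mp h2) h1⟩
    | succ n ih =>
      obtain ⟨a, ha1, ha2⟩ := ih
      have hne : ∀ u, rank u = n + 1 → (F u \ {a (P u)}).Nonempty := by
        intro u hu
        obtain ⟨x, hx, y, hy, hxy⟩ := Finset.one_lt_card.mp (hF2 u (by omega))
        by_cases hxa : x = a (P u)
        · exact ⟨y, Finset.mem_sdiff.mpr ⟨hy, by simp [← hxa, Ne.symm hxy]⟩⟩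
        · exact ⟨x, Finset.mem_sdiff.mpr ⟨hx, by simp [hxa]⟩⟩
      refine ⟨fun u => if h : rank u = n + 1 then (hne u h).choose else a u, ?_, ?_⟩
      · intro u
        by_cases h : rank u = n + 1
        · simp only [dif_pos h]
          exact (Finset.mem_sdiff.mp (hne u h).choose_spec).1
        · simp only [dif_neg h]; exact ha1 u
      · intro u h1 h2
        have hPu : rank (P u) ≠ n + 1 := fun hc => by have := hP u h1; omega
        by_cases h : rank u = n + 1
        · simp only [dif_pos h, dif_neg hPu]
          have := (Finset.mem_sdiff.mp (hne u h).choose_spec).2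
          simpa using this
        · simp only [dif_neg h, dif_neg hPu]
          exact ha2 u h1 (by omega)
  obtain ⟨a, ha1, ha2⟩ := key (Finset.univ.sup rank)
  exact ⟨a, ha1, fun u h1 => ha2 u h1 (Finset.le_sup (Finset.mem_univ u))⟩

lemma descend {W : Type*} (H : SimpleGraph W) {x y : W} (h : H.dist x y ≠ 0) :
    ∃ z, H.Adj x z ∧ H.dist z y < H.dist x y := by
  obtain ⟨p, hp⟩ := exists_walk_of_dist_ne_zero h
  cases p with
  | nil => simp at h
  | cons hadj q =>
    refine ⟨_, hadj, ?_⟩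
    have := dist_le q
    simp [Walk.length_cons] at hp
    omega


lemma key_lemma {V : Type*} [Fintype V] (G : SimpleGraph V)
    (v : V) (huniv : ∀ u, u ≠ v → G.Adj v u)
    (hq : Nat.card ((G.induce {u : V | u ≠ v}).ConnectedComponent) ≤ 2)
    (L : Sym2 V → Finset ℕ) (hL : ∀ e ∈ G.edgeSet, 3 ≤ (L e).card) :
    ∃ c : Sym2 V → ℕ, (∀ e ∈ G.edgeSet, c e ∈ L e) ∧ IsRainbowConnected G c := by
  classical
  set S : Set V := {u : V | u ≠ v} with hSdef
  set H : SimpleGraph S := G.induce S with hHdef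
  have hmemS : ∀ u : V, u ≠ v → u ∈ S := fun u hu => hu
  have hstar : ∀ u : V, u ≠ v → s(u, v) ∈ G.edgeSet := by
    intro u hu
    rw [Sym2.eq_swap]
    exact G.mem_edgeSet.mpr (huniv u hu)
  have hFinComp : Finite H.ConnectedComponent :=
    Finite.of_surjective (Quot.mk H.Reachable) (fun q => Quot.exists_rep q)
  -- rank function
  obtain ⟨rV, hrV, hrv⟩ : ∃ rk : V → ℕ,
      (∀ (u : V) (h : u ≠ v),
        rk u = H.dist ⟨u, h⟩ (Quot.out (H.connectedComponentMk ⟨u, h⟩))) ∧ rk v = 0 :=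
    ⟨fun u => if h : u ≠ v then
        H.dist ⟨u, h⟩ (Quot.out (H.connectedComponentMk ⟨u, h⟩)) else 0,
      fun u h => dif_pos h, dif_neg (by simp)⟩
  have hreach : ∀ (u : V) (h : u ≠ v),
      H.Reachable ⟨u, h⟩ (Quot.out (H.connectedComponentMk ⟨u, h⟩)) := by
    intro u h
    exact ConnectedComponent.exact (Quot.out_eq _).symm
  have hroot : ∀ (u : V) (h : u ≠ v), rV u = 0 →
      u = (Quot.out (H.connectedComponentMk ⟨u, h⟩)).1 := by
    intro u h h0
    rw [hrV u h] at h0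
    have := ((hreach u h).dist_eq_zero_iff).mp h0
    exact congrArg Subtype.val this
  -- parent
  have hdesc : ∀ u, u ≠ v → rV u ≠ 0 → ∃ z, z ≠ v ∧ G.Adj u z ∧ rV z < rV u := by
    intro u h h0
    rw [hrV u h] at h0
    obtain ⟨z, hadj, hdist⟩ := descend H h0
    refine ⟨z.1, z.2, ?_, ?_⟩
    · exact hadj
    · have hz : (z.1 : V) ≠ v := z.2
      have hκ : H.connectedComponentMk ⟨z.1, hz⟩ = H.connectedComponentMk ⟨u, h⟩ :=
        ConnectedComponent.sound (hadj.symm.reachable)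
      rw [hrV z.1 hz, hrV u h, hκ]
      exact hdist
  choose! P hP1 hP2 hP3 using hdesc
  have hPrank : ∀ u, rV u ≠ 0 → rV (P u) < rV u := by
    intro u h0
    by_cases h : u = v
    · subst h; exact absurd hrv h0
    · exact hP3 u h h0
  -- root values
  obtain ⟨rootVal, hrootVal1, hrootVal2⟩ :=
    sdr_aux (fun K : H.ConnectedComponent => L s((Quot.out K).1, v))
      (fun K => le_trans (le_trans hq (by norm_num))
        (hL _ (hstar _ (Quot.out K).2)))
  -- lists for the star colouring
  obtain ⟨F, hFr, hFn, hFv⟩ : ∃ F : V → Finset ℕ,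
      (∀ (u : V) (h : u ≠ v), rV u = 0 →
        F u = {rootVal (H.connectedComponentMk ⟨u, h⟩)}) ∧
      (∀ u : V, u ≠ v → rV u ≠ 0 → F u = L s(u, v)) ∧ F v = {0} := by
    refine ⟨fun u => if h : u ≠ v then
        (if rV u = 0 then {rootVal (H.connectedComponentMk ⟨u, h⟩)} else L s(u, v))
      else {0}, ?_, ?_, ?_⟩
    · intro u h h0; dsimp only; rw [dif_pos h, if_pos h0]
    · intro u h h0; dsimp only; rw [dif_pos h, if_neg h0]
    · dsimp only; rw [dif_neg (by simp)]
  obtain ⟨a, ha1, ha2⟩ := forest_coloring P rV hPrank F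
    (by
      intro u
      by_cases h : u = v
      · subst h; rw [hFv]; simp
      · by_cases h0 : rV u = 0
        · rw [hFr u h h0]; simp
        · rw [hFn u h h0]
          exact Finset.card_pos.mp (by have := hL _ (hstar u h); omega))
    (by
      intro u h0
      have h : u ≠ v := fun hc => h0 (hc ▸ hrv)
      rw [hFn u h h0]
      have := hL _ (hstar u h); omega)
  have aL : ∀ u : V, u ≠ v → a u ∈ L s(u, v) := by
    intro u h
    by_cases h0 : rV u = 0
    · have := ha1 u
      rw [hFr u h h0, Finset.mem_singleton] at this
      rw [this]
      have h2 := hrootVal1 (H.connectedComponentMk ⟨u, h⟩)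
      rwa [← hroot u h h0] at h2
    · have := ha1 u
      rwa [hFn u h h0] at this
  have aroots : ∀ u w : V, u ≠ v → w ≠ v → rV u = 0 → rV w = 0 → u ≠ w →
      a u ≠ a w := by
    intro u w hu hw h0u h0w huw
    have h1 := ha1 u; rw [hFr u hu h0u, Finset.mem_singleton] at h1
    have h2 := ha1 w; rw [hFr w hw h0w, Finset.mem_singleton] at h2
    rw [h1, h2]
    intro hc
    have hKe := hrootVal2 hc
    apply huw
    rw [hroot u hu h0u, hroot w hw h0w, hKe]
  -- colouring of non-star edges
  obtain ⟨bad, hbad⟩ : ∃ bad : Sym2 V → Finset ℕ, ∀ x y, bad s(x, y) = {a x, a y} :=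
    ⟨Sym2.lift ⟨fun x y => {a x, a y}, fun x y => Finset.pair_comm _ _⟩, fun x y => rfl⟩
  have hpick : ∀ e, e ∈ G.edgeSet → ∃ n, n ∈ L e ∧ n ∉ bad e := by
    intro e he
    induction e using Sym2.ind with
    | _ x y =>
      have hb : (bad s(x, y)).card ≤ 2 := by
        rw [hbad]
        exact (Finset.card_insert_le _ _).trans (by simp)
      have : ¬ L s(x, y) ⊆ bad s(x, y) := by
        intro hsub
        have := Finset.card_le_card hsub
        have := hL _ he
        omega
      exact Finset.not_subset.mp this
  choose! pick hpick1 hpick2 using hpick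
  -- the final colouring
  obtain ⟨c, hc1, hc2⟩ : ∃ c : Sym2 V → ℕ,
      (∀ u : V, u ≠ v → c s(u, v) = a u) ∧
      (∀ x y : V, x ≠ v → y ≠ v → c s(x, y) = pick s(x, y)) := by
    refine ⟨fun e => if h : v ∈ e then a (Sym2.Mem.other h) else pick e, ?_, ?_⟩
    · intro u hu
      have hv : v ∈ s(u, v) := Sym2.mem_mk_right u v
      dsimp only
      rw [dif_pos hv]
      congr 1
      have h2 : s(v, Sym2.Mem.other hv) = s(v, u) := by
        rw [Sym2.other_spec hv]; exact Sym2.eq_swap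
      exact Sym2.congr_right.mp h2
    · intro x y hx hy
      dsimp only
      rw [dif_neg]
      rw [Sym2.mem_iff]
      push_neg
      exact ⟨Ne.symm hx, Ne.symm hy⟩
  have cpick : ∀ x y : V, G.Adj x y → x ≠ v → y ≠ v →
      c s(x, y) ∈ L s(x, y) ∧ c s(x, y) ≠ a x ∧ c s(x, y) ≠ a y := by
    intro x y hadj hx hy
    have he : s(x, y) ∈ G.edgeSet := G.mem_edgeSet.mpr hadj
    rw [hc2 x y hx hy]
    refine ⟨hpick1 _ he, ?_, ?_⟩ <;>
    · have := hpick2 _ he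
      rw [hbad] at this
      simp only [Finset.mem_insert, Finset.mem_singleton] at this
      push_neg at this
      first | exact this.1 | exact this.2
  have cedge : ∀ e ∈ G.edgeSet, c e ∈ L e := by
    intro e he
    induction e using Sym2.ind with
    | _ x y =>
      have hadj : G.Adj x y := G.mem_edgeSet.mp he
      by_cases hx : x = v
      · subst hx
        have hy : y ≠ x := hadj.ne'
        rw [Sym2.eq_swap, hc1 y hy]
        exact aL y hy
      · by_cases hy : y = v
        · subst hy
          rw [hc1 x hx]
          exact aL x hx
        · exact (cpick x y hadj hx hy).1
  refine ⟨c, cedge, ?_⟩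
  -- rainbow connectivity
  have main3 : ∀ x y : V, x ≠ v → y ≠ v → ¬ G.Adj x y → x ≠ y → a x = a y →
      rV y ≠ 0 → ∃ p : G.Walk x y, p.IsPath ∧ (p.edges.map c).Nodup := by
    intro x y hx hy hnadj hxy hax h0
    have hz1 : P y ≠ v := hP1 y hy h0
    have hz2 : G.Adj y (P y) := hP2 y hy h0
    have hzx : P y ≠ x := by
      intro hc
      apply hnadj
      have h2 := hz2.symm
      rw [hc] at h2
      exact h2
    have hzy : P y ≠ y := hz2.ne'
    have hay : a y ≠ a (P y) := ha2 y h0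
    obtain ⟨hcl, hca, hcb⟩ := cpick (P y) y hz2.symm hz1 hy
    refine ⟨Walk.cons ((huniv x hx).symm)
      (Walk.cons (huniv (P y) hz1) (Walk.cons hz2.symm Walk.nil)), ?_, ?_⟩
    · rw [Walk.isPath_def]
      simp only [Walk.support_cons, Walk.support_nil]
      refine List.nodup_cons.mpr ⟨?_, List.nodup_cons.mpr ⟨?_,
        List.nodup_cons.mpr ⟨?_, List.nodup_singleton _⟩⟩⟩
      · simp [hx, Ne.symm hzx, hxy]
      · simp [Ne.symm hz1, Ne.symm hy]
      · simp [hzy]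
    · simp only [Walk.edges_cons, Walk.edges_nil, List.map_cons, List.map_nil]
      rw [hc1 x hx, show s(v, P y) = s(P y, v) from Sym2.eq_swap, hc1 (P y) hz1]
      have h1 : a x ≠ a (P y) := by rw [hax]; exact hay
      have h2 : a x ≠ c s(P y, y) := by rw [hax]; exact fun hc => hcb hc.symm
      have h3 : a (P y) ≠ c s(P y, y) := fun hc => hca hc.symm
      refine List.nodup_cons.mpr ⟨?_, List.nodup_cons.mpr ⟨?_,
        List.nodup_singleton _⟩⟩
      · simp [h1, h2]
      · simp [h3]
  intro x y
  by_cases hxy : x = y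
  · subst hxy
    exact ⟨Walk.nil, Walk.IsPath.nil, by simp⟩
  by_cases hadj : G.Adj x y
  · refine ⟨Walk.cons hadj Walk.nil, ?_, by simp⟩
    rw [Walk.isPath_def]
    simp [hadj.ne]
  have hx : x ≠ v := by
    rintro rfl
    exact hadj (huniv y (Ne.symm hxy))
  have hy : y ≠ v := by
    rintro rfl
    exact hadj (huniv x hxy).symm
  by_cases hax : a x = a y
  · by_cases h0y : rV y = 0
    · by_cases h0x : rV x = 0
      · exact absurd hax (aroots x y hx hy h0x h0y hxy)
      · obtain ⟨p, hp, hnd⟩ := main3 y x hy hx (fun h => hadj h.symm) (Ne.symm hxy)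
          hax.symm h0x
        exact ⟨p.reverse, hp.reverse, by
          rw [Walk.edges_reverse, List.map_reverse]
          exact List.nodup_reverse.mpr hnd⟩
    · exact main3 x y hx hy hadj hxy hax h0y
  · refine ⟨Walk.cons ((huniv x hx).symm) (Walk.cons (huniv y hy) Walk.nil), ?_, ?_⟩
    · rw [Walk.isPath_def]
      simp only [Walk.support_cons, Walk.support_nil]
      refine List.nodup_cons.mpr ⟨?_, List.nodup_cons.mpr ⟨?_, List.nodup_singleton _⟩⟩
      · simp [hx, hxy]
      · simp [Ne.symm hy]
    · simp only [Walk.edges_cons, Walk.edges_nil, List.map_cons, List.map_nil]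
      rw [hc1 x hx, show s(v, y) = s(y, v) from Sym2.eq_swap, hc1 y hy]
      simp [hax]

end AuxRainbow

/-- Theorem: if `G` is non-complete with a universal vertex `v` such that `G - v` has
one or two components, then `2 ≤ rc(G) ≤ rc^ℓ(G) ≤ 3`. -/
theorem stmt8 {V : Type*} [Fintype V] (G : SimpleGraph V) (hG : G.Connected)
    (hne : G ≠ ⊤) (v : V) (huniv : ∀ u, u ≠ v → G.Adj v u) (p q : ℕ)
    (hq : Nat.card ((G.induce {u : V | u ≠ v}).ConnectedComponent) = q)
    (hp : p = {u : V | u ≠ v ∧ ∀ w, w ≠ v → ¬ G.Adj u w}.ncard)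
    (hq12 : q = 1 ∨ q = 2) :
    2 ≤ rc G ∧ rc G ≤ rcl G ∧ rcl G ≤ 3 := by
  classical
  have hq2 : Nat.card ((G.induce {u : V | u ≠ v}).ConnectedComponent) ≤ 2 := by
    rw [hq]; rcases hq12 with rfl | rfl <;> norm_num
  have h3mem : (3:ℕ) ∈ {r : ℕ | ∀ L : Sym2 V → Finset ℕ,
      (∀ e ∈ G.edgeSet, r ≤ (L e).card) →
      ∃ c : Sym2 V → ℕ, (∀ e ∈ G.edgeSet, c e ∈ L e) ∧ IsRainbowConnected G c} :=
    fun L hL => key_lemma G v huniv hq2 L hL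
  have hrcl3 : rcl G ≤ 3 := Nat.sInf_le h3mem
  have hmem : ∀ L : Sym2 V → Finset ℕ, (∀ e ∈ G.edgeSet, rcl G ≤ (L e).card) →
      ∃ c : Sym2 V → ℕ, (∀ e ∈ G.edgeSet, c e ∈ L e) ∧ IsRainbowConnected G c :=
    Nat.sInf_mem (⟨3, h3mem⟩ : Set.Nonempty {r : ℕ | ∀ L : Sym2 V → Finset ℕ,
      (∀ e ∈ G.edgeSet, r ≤ (L e).card) →
      ∃ c : Sym2 V → ℕ, (∀ e ∈ G.edgeSet, c e ∈ L e) ∧ IsRainbowConnected G c})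
  obtain ⟨x0, y0, hxy0, hnadj0⟩ : ∃ x y : V, x ≠ y ∧ ¬ G.Adj x y := by
    by_contra h
    push_neg at h
    apply hne
    ext x y
    simp only [top_adj]
    exact ⟨fun ha => ha.ne, fun hne' => h x y hne'⟩
  obtain ⟨u1, hu1⟩ : ∃ u : V, G.Adj v u := by
    by_cases h : x0 = v
    · exact ⟨y0, huniv y0 (fun hc => hxy0 (h.trans hc.symm))⟩
    · exact ⟨x0, huniv x0 h⟩
  have hedge : s(v, u1) ∈ G.edgeSet := G.mem_edgeSet.mpr hu1
  have hr0 : 0 < rcl G := by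
    by_contra h
    push_neg at h
    have h0 : rcl G = 0 := by omega
    obtain ⟨c, hc, -⟩ := hmem (fun _ => ∅) (fun e _ => by rw [h0]; exact Nat.zero_le _)
    exact absurd (hc _ hedge) (by simp)
  obtain ⟨c, hcmem, hcrb⟩ := hmem (fun _ => Finset.range (rcl G))
    (fun e _ => by simp)
  have hcr : ∀ e ∈ G.edgeSet, c e < rcl G := fun e he => Finset.mem_range.mp (hcmem e he)
  have hrb' : IsRainbowConnected G
      (fun e => if h : c e < rcl G then (⟨c e, h⟩ : Fin (rcl G)) else ⟨0, hr0⟩) := by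
    intro x y
    obtain ⟨pw, hp, hnd⟩ := hcrb x y
    refine ⟨pw, hp, ?_⟩
    have hmap : pw.edges.map (fun e => if h : c e < rcl G then
        (⟨c e, h⟩ : Fin (rcl G)) else ⟨0, hr0⟩) =
        (pw.edges.map c).map (fun n => if h : n < rcl G then
        (⟨n, h⟩ : Fin (rcl G)) else ⟨0, hr0⟩) := by
      rw [List.map_map]; rfl
    rw [hmap]
    refine List.Nodup.map_on ?_ hnd
    intro m hm n hn hmn
    obtain ⟨e1, he1, rfl⟩ := List.mem_map.mp hm
    obtain ⟨e2, he2, rfl⟩ := List.mem_map.mp hn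
    have h1 : c e1 < rcl G := hcr _ (pw.edges_subset_edgeSet he1)
    have h2 : c e2 < rcl G := hcr _ (pw.edges_subset_edgeSet he2)
    rw [dif_pos h1, dif_pos h2] at hmn
    exact congrArg Fin.val hmn
  have hrc_memS : rcl G ∈ {m : ℕ | ∃ c : Sym2 V → Fin m, IsRainbowConnected G c} :=
    ⟨_, hrb'⟩
  have hrcle : rc G ≤ rcl G := Nat.sInf_le hrc_memS
  have hrc_in : rc G ∈ {m : ℕ | ∃ c : Sym2 V → Fin m, IsRainbowConnected G c} :=
    Nat.sInf_mem ⟨rcl G, hrc_memS⟩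
  have hlow : ∀ m : ℕ, (∃ c0 : Sym2 V → Fin m, IsRainbowConnected G c0) → 2 ≤ m := by
    intro m
    match m with
    | 0 =>
      rintro ⟨c0, -⟩
      exact (c0 s(v, v)).elim0
    | 1 =>
      rintro ⟨c0, hc0⟩
      obtain ⟨pw, hp, hnd⟩ := hc0 x0 y0
      cases pw with
      | nil => exact absurd rfl hxy0
      | cons h1 qw =>
        cases qw with
        | nil => exact absurd h1 hnadj0
        | cons h2 q2 =>
          exfalso
          simp only [Walk.edges_cons, List.map_cons, List.nodup_cons] at hnd
          exact hnd.1 (List.mem_cons.mpr (Or.inl (Subsingleton.elim _ _)))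
    | (n+2) => exact fun _ => by omega
  exact ⟨hlow _ hrc_in, hrcle, hrcl3⟩
end

section
/- For the wheel W_n (n ≥ 3), the list rainbow connection number rc^ℓ(W_n) equals 1 if n = 3, equals 2 if 4 ≤ n ≤ 6, and equals 3 if n ≥ 7. -/
open SimpleGraph

section paths
variable {V β : Type*} {G : SimpleGraph V} (c : Sym2 V → β)

lemma rainbow1 {u v : V} (h : G.Adj u v) :
    ∃ p : G.Walk u v, p.IsPath ∧ (p.edges.map c).Nodup := by
  refine ⟨Walk.cons h Walk.nil, ?_, by simp⟩
  simp [Walk.isPath_def, h.ne]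

lemma rainbow2 {u w v : V} (h1 : G.Adj u w) (h2 : G.Adj w v) (huv : u ≠ v)
    (hc : c s(u, w) ≠ c s(w, v)) :
    ∃ p : G.Walk u v, p.IsPath ∧ (p.edges.map c).Nodup := by
  refine ⟨Walk.cons h1 (Walk.cons h2 Walk.nil), ?_, by simp [hc]⟩
  simp [Walk.isPath_def, h1.ne, h2.ne, huv]

lemma rainbow3 {u w x v : V} (h1 : G.Adj u w) (h2 : G.Adj w x) (h3 : G.Adj x v)
    (hux : u ≠ x) (huv : u ≠ v) (hwv : w ≠ v)
    (c12 : c s(u, w) ≠ c s(w, x)) (c13 : c s(u, w) ≠ c s(x, v))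
    (c23 : c s(w, x) ≠ c s(x, v)) :
    ∃ p : G.Walk u v, p.IsPath ∧ (p.edges.map c).Nodup := by
  refine ⟨Walk.cons h1 (Walk.cons h2 (Walk.cons h3 Walk.nil)), ?_, by simp [c12, c13, c23]⟩
  simp [Walk.isPath_def, h1.ne, h2.ne, h3.ne, hux, huv, hwv]

end paths

section wheeladj
variable {n : ℕ}

lemma hub_adj (hn : 1 ≤ n) (a : Fin n) : (wheel n).Adj none (some a) := by
  refine ⟨by simp, Or.inl (Or.inr ⟨rfl, by simp⟩)⟩

lemma rim_adj {a b : Fin n} (h : (cycleGraph n).Adj a b) :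
    (wheel n).Adj (some a) (some b) := by
  refine ⟨by simpa using h.ne, Or.inl (Or.inl ⟨a, b, rfl, rfl, h⟩)⟩

lemma adj_of_wheel {a b : Fin n} (h : (wheel n).Adj (some a) (some b)) :
    (cycleGraph n).Adj a b := by
  rcases h with ⟨-, h | h⟩
  · rcases h with ⟨x, y, hx, hy, hxy⟩ | ⟨h, -⟩
    · cases hx; cases hy; exact hxy
    · exact absurd h (by simp)
  · rcases h with ⟨x, y, hx, hy, hxy⟩ | ⟨h, -⟩
    · cases hx; cases hy; exact hxy.symm
    · exact absurd h (by simp)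

lemma not_wheel_none_none : ¬ (wheel n).Adj none none := fun h => h.1 rfl

end wheeladj

section picks

lemma pick1 (S : Finset ℕ) (h : 1 ≤ S.card) : ∃ z, z ∈ S :=
  Finset.card_pos.mp (by omega)

lemma pick2 (S : Finset ℕ) (h : 2 ≤ S.card) (x : ℕ) : ∃ z ∈ S, z ≠ x :=
  Finset.exists_mem_ne (by omega) x

lemma pick3 (S : Finset ℕ) (h : 3 ≤ S.card) (x y : ℕ) : ∃ z ∈ S, z ≠ x ∧ z ≠ y := by
  have hc : ((S \ {x, y})).Nonempty := by
    rw [← Finset.card_pos]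
    have h2 : ({x, y} : Finset ℕ).card ≤ 2 := (Finset.card_insert_le _ _).trans (by simp)
    have := Finset.le_card_sdiff ({x, y} : Finset ℕ) S
    omega
  obtain ⟨z, hz⟩ := hc
  simp only [Finset.mem_sdiff, Finset.mem_insert, Finset.mem_singleton] at hz
  exact ⟨z, hz.1, by tauto, by tauto⟩

end picks

section coloring
variable {n : ℕ} [NeZero n]

/-- The symmetric colour function built from spoke colours `σ` and rim colours `ρ`. -/
def wf (σ ρ : Fin n → ℕ) : Option (Fin n) → Option (Fin n) → ℕ
  | none, none => 0
  | none, some j => σ j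
  | some i, none => σ i
  | some i, some j => if i + 1 = j then ρ i else if j + 1 = i then ρ j else 0

lemma not_both (hn : 3 ≤ n) {i j : Fin n} (h1 : i + 1 = j) (h2 : j + 1 = i) : False := by
  have h3 : i + 1 + 1 = i + 0 := by rw [h1, h2, add_zero]
  have h4 : (1 + 1 : Fin n) = 0 := by
    have := add_left_cancel ((add_assoc i 1 1).symm.trans h3)
    exact this
  have h5 : ((1 : Fin n) + 1).val = (0 : Fin n).val := congrArg Fin.val h4
  rw [Fin.val_add, Fin.val_one', Fin.val_zero, Nat.mod_eq_of_lt (show 1 < n by omega),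
    Nat.mod_eq_of_lt (show 1 + 1 < n by omega)] at h5
  omega

lemma wf_symm (hn : 3 ≤ n) (σ ρ : Fin n → ℕ) (x y : Option (Fin n)) :
    wf σ ρ x y = wf σ ρ y x := by
  match x, y with
  | none, none => rfl
  | none, some j => simp [wf]
  | some i, none => simp [wf]
  | some i, some j =>
    simp only [wf]
    by_cases h1 : i + 1 = j <;> by_cases h2 : j + 1 = i <;> simp [h1, h2]
    exact (not_both hn h1 h2).elim

/-- The induced edge colouring. -/
def mkc (hn : 3 ≤ n) (σ ρ : Fin n → ℕ) : Sym2 (Option (Fin n)) → ℕ :=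
  Sym2.lift ⟨fun x y => wf σ ρ x y, fun x y => wf_symm hn σ ρ x y⟩

lemma mkc_spoke (hn : 3 ≤ n) (σ ρ : Fin n → ℕ) (i : Fin n) :
    mkc hn σ ρ s(none, some i) = σ i := rfl

lemma mkc_spoke' (hn : 3 ≤ n) (σ ρ : Fin n → ℕ) (i : Fin n) :
    mkc hn σ ρ s(some i, none) = σ i := rfl

lemma mkc_rim (hn : 3 ≤ n) (σ ρ : Fin n → ℕ) (i : Fin n) :
    mkc hn σ ρ s(some i, some (i + 1)) = ρ i := by
  simp [mkc, wf]

end coloring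

section master
variable {n : ℕ} [NeZero n]

lemma cycAdj_succ (hn : 3 ≤ n) (i : Fin n) : (cycleGraph n).Adj i (i + 1) := by
  rw [cycleGraph_adj']
  right
  rw [add_sub_cancel_left, Fin.val_one']
  exact Nat.mod_eq_of_lt (by omega)

/-- Coverage condition. -/
def Cover (hn : 3 ≤ n) (σ ρ : Fin n → ℕ) : Prop :=
  ∀ a b : Fin n, a ≠ b → ¬ (cycleGraph n).Adj a b →
    (σ a ≠ σ b) ∨
    (b = a + 2 ∧ ρ a ≠ ρ (a + 1)) ∨
    (a = b + 2 ∧ ρ b ≠ ρ (b + 1)) ∨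
    (σ a = σ b ∧ ρ a ≠ σ a ∧ ρ a ≠ σ (a + 1) ∧ σ (a + 1) ≠ σ a)

lemma rainbow_master (hn : 3 ≤ n) (σ ρ : Fin n → ℕ) (hcov : Cover hn σ ρ) :
    IsRainbowConnected (wheel n) (mkc hn σ ρ) := by
  have hnz : 1 ≤ n := by omega
  intro u v
  match u, v with
  | none, none => exact ⟨Walk.nil, by simp, by simp⟩
  | none, some b => exact rainbow1 _ (hub_adj hnz b)
  | some a, none => exact rainbow1 _ (hub_adj hnz a).symm
  | some a, some b =>
    by_cases hab : a = b
    · subst hab; exact ⟨Walk.nil, by simp, by simp⟩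
    by_cases hadj : (cycleGraph n).Adj a b
    · exact rainbow1 _ (rim_adj hadj)
    have hsome : (some a : Option (Fin n)) ≠ some b := by simpa using hab
    rcases hcov a b hab hadj with h | ⟨hb, h⟩ | ⟨ha, h⟩ | ⟨h0, h1, h2, h3⟩
    · refine rainbow2 _ (hub_adj hnz a).symm (hub_adj hnz b) hsome ?_
      rw [mkc_spoke', mkc_spoke]
      exact h
    · -- b = a + 2, rim path a, a+1, a+2
      have hb' : b = (a + 1) + 1 := by rw [hb, add_assoc]; exact congrArg (a + ·) (Fin.ext (Nat.add_mod 1 1 n))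
      refine rainbow2 _ (rim_adj (cycAdj_succ hn a)) (rim_adj (by rw [hb']; exact cycAdj_succ hn (a+1))) hsome ?_
      rw [mkc_rim, hb', mkc_rim]
      exact h
    · -- a = b + 2, rim path a = b+2, b+1, b
      have ha' : a = (b + 1) + 1 := by rw [ha, add_assoc]; exact congrArg (b + ·) (Fin.ext (Nat.add_mod 1 1 n))
      refine rainbow2 _ (G := wheel n) (w := some (b+1))
        (by rw [ha']; exact (rim_adj (cycAdj_succ hn (b+1))).symm)
        ((rim_adj (cycAdj_succ hn b)).symm) hsome ?_
      have e1 : s((some a : Option (Fin n)), some (b+1)) = s(some (b+1), some ((b+1)+1)) := by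
        rw [ha', Sym2.eq_swap]
      have e2 : s((some (b+1) : Option (Fin n)), some b) = s(some b, some (b+1)) := Sym2.eq_swap
      rw [e1, e2, mkc_rim, mkc_rim]
      exact h.symm
    · -- path a, a+1, hub, b
      have hwv : (some (a + 1) : Option (Fin n)) ≠ some b := by
        simp only [ne_eq, Option.some.injEq]
        intro hh
        exact hadj (hh ▸ cycAdj_succ hn a)
      refine rainbow3 _ (rim_adj (cycAdj_succ hn a)) (hub_adj hnz (a+1)).symm (hub_adj hnz b)
        (by simp) hsome hwv ?_ ?_ ?_
      · rw [mkc_rim, mkc_spoke']; exact h2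
      · rw [mkc_rim, mkc_spoke, ← h0]; exact h1
      · rw [mkc_spoke', mkc_spoke, ← h0]; exact h3

end master

section infra
variable {n : ℕ}

lemma cycAdj_iff (hn : 3 ≤ n) {a b : Fin n} [NeZero n] :
    (cycleGraph n).Adj a b ↔ b = a + 1 ∨ a = b + 1 := by
  have h1 : ((1 : Fin n)).val = 1 := by
    rw [Fin.val_one']; exact Nat.mod_eq_of_lt (by omega)
  rw [cycleGraph_adj']
  have e1 : ((a - b).val = 1) ↔ a = b + 1 := by
    rw [show ((a - b).val = 1) ↔ a - b = 1 from by rw [Fin.ext_iff, h1], sub_eq_iff_eq_add,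
      add_comm]
  have e2 : ((b - a).val = 1) ↔ b = a + 1 := by
    rw [show ((b - a).val = 1) ↔ b - a = 1 from by rw [Fin.ext_iff, h1], sub_eq_iff_eq_add,
      add_comm]
  rw [e1, e2]; tauto

lemma val_succ [NeZero n] (hn : 3 ≤ n) (u : Fin n) : (u + 1).val = (u.val + 1) % n := by
  rw [Fin.val_add, Fin.val_one', Nat.mod_eq_of_lt (show 1 < n by omega)]

lemma succ_val_cases [NeZero n] (hn : 3 ≤ n) (u : Fin n) :
    ((u + 1).val = u.val + 1 ∧ u.val + 1 < n) ∨ ((u + 1).val = 0 ∧ u.val = n - 1) := by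
  have hu := u.isLt
  rcases lt_or_ge (u.val + 1) n with h' | h'
  · exact Or.inl ⟨by rw [val_succ hn, Nat.mod_eq_of_lt h'], h'⟩
  · right
    have h2 : u.val = n - 1 := by omega
    refine ⟨?_, h2⟩
    rw [val_succ hn, h2]
    have : n - 1 + 1 = n := by omega
    rw [this, Nat.mod_self]

lemma mkc_mem [NeZero n] (hn : 3 ≤ n) (σ ρ : Fin n → ℕ) (L : Sym2 (Option (Fin n)) → Finset ℕ)
    (hσ : ∀ i, σ i ∈ L s(none, some i)) (hρ : ∀ i, ρ i ∈ L s(some i, some (i + 1))) :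
    ∀ e ∈ (wheel n).edgeSet, mkc hn σ ρ e ∈ L e := by
  intro e he
  induction e using Sym2.ind with
  | _ x y =>
    rw [SimpleGraph.mem_edgeSet] at he
    match x, y with
    | none, none => exact (not_wheel_none_none he).elim
    | none, some j => rw [mkc_spoke]; exact hσ j
    | some i, none =>
      rw [show s((some i : Option (Fin n)), none) = s(none, some i) from Sym2.eq_swap,
        mkc_spoke]
      exact hσ i
    | some i, some j =>
      have hc := adj_of_wheel he
      rcases (cycAdj_iff hn).mp hc with h | h
      · subst h; rw [mkc_rim]; exact hρ i
      · subst h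
        rw [show s((some (j+1) : Option (Fin n)), some j) = s(some j, some (j+1)) from
          Sym2.eq_swap, mkc_rim]
        exact hρ j

/-- The membership predicate for the `rcl` infimum, specialised to the wheel. -/
def Pw (n r : ℕ) : Prop :=
  ∀ L : Sym2 (Option (Fin n)) → Finset ℕ, (∀ e ∈ (wheel n).edgeSet, r ≤ (L e).card) →
    ∃ c : Sym2 (Option (Fin n)) → ℕ,
      (∀ e ∈ (wheel n).edgeSet, c e ∈ L e) ∧ IsRainbowConnected (wheel n) c

lemma Pw_mono {r r' : ℕ} (h : r ≤ r') (hp : Pw n r) : Pw n r' :=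
  fun L hL => hp L (fun e he => le_trans h (hL e he))

lemma rcl_wheel_eq {k : ℕ} (hk : 1 ≤ k) (h1 : Pw n k) (h2 : ¬ Pw n (k - 1)) :
    rcl (wheel n) = k := by
  have hset : {r : ℕ | ∀ L : Sym2 (Option (Fin n)) → Finset ℕ,
      (∀ e ∈ (wheel n).edgeSet, r ≤ (L e).card) →
      ∃ c : Sym2 (Option (Fin n)) → ℕ,
        (∀ e ∈ (wheel n).edgeSet, c e ∈ L e) ∧ IsRainbowConnected (wheel n) c} = {r | Pw n r} :=
    rfl
  rw [rcl, hset]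
  apply le_antisymm
  · exact Nat.sInf_le h1
  · by_contra hlt
    push_neg at hlt
    have hmem : Pw n (sInf {r | Pw n r}) := Nat.sInf_mem (⟨k, h1⟩ : Set.Nonempty {r | Pw n r})
    exact h2 (Pw_mono (by omega) hmem)

end infra

section lower
variable {n : ℕ}

lemma walk_shape {V : Type*} {G : SimpleGraph V} {u v : V} (p : G.Walk u v) :
    u = v ∨ G.Adj u v ∨
    (∃ w, ∃ _ : G.Adj u w, ∃ _ : G.Adj w v, p.edges = [s(u, w), s(w, v)]) ∨
    (∃ w x y rest, ∃ _ : G.Adj u w, ∃ _ : G.Adj w x, ∃ _ : G.Adj x y,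
      p.edges = s(u, w) :: s(w, x) :: s(x, y) :: rest) := by
  cases p with
  | nil => exact Or.inl rfl
  | @cons _ w _ h q =>
    cases q with
    | nil => exact Or.inr (Or.inl h)
    | @cons _ x _ h' q' =>
      cases q' with
      | nil => exact Or.inr (Or.inr (Or.inl ⟨w, h, h', by simp⟩))
      | @cons _ y _ h'' q'' =>
        exact Or.inr (Or.inr (Or.inr ⟨w, x, y, q''.edges, h, h', h'', by simp⟩))

lemma not_Pw_zero (hn : 1 ≤ n) : ¬ Pw n 0 := by
  intro hp
  obtain ⟨c, hc, -⟩ := hp (fun _ => (∅ : Finset ℕ)) (fun e _ => by simp)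
  have := hc s(none, some ⟨0, by omega⟩) (hub_adj hn _)
  simp at this

lemma not_Pw_one (hn : 4 ≤ n) : ¬ Pw n 1 := by
  haveI : NeZero n := ⟨by omega⟩
  intro hp
  obtain ⟨c, hc, hrc⟩ := hp (fun _ => ({0} : Finset ℕ)) (fun e _ => by simp)
  have hc0 : ∀ e ∈ (wheel n).edgeSet, c e = 0 := by
    intro e he; simpa using hc e he
  set a : Fin n := ⟨0, by omega⟩ with ha
  set b : Fin n := ⟨2, by omega⟩ with hb
  have hab : a ≠ b := by simp [ha, hb, Fin.ext_iff]
  have hadj : ¬ (wheel n).Adj (some a) (some b) := by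
    intro h
    have := (cycAdj_iff (by omega)).mp (adj_of_wheel h)
    have h1 := succ_val_cases (by omega) a
    have h2 := succ_val_cases (by omega) b
    rcases this with h | h <;> have := congrArg Fin.val h <;>
      simp only [ha, hb] at this h1 h2 <;> omega
  obtain ⟨p, hp', hr⟩ := hrc (some a) (some b)
  rcases walk_shape p with h | h | ⟨w, h1, h2, he⟩ | ⟨w, x, y, rest, h1, h2, h3, he⟩
  · exact hab (by simpa using h)
  · exact hadj h
  · rw [he] at hr
    rw [List.map_cons, List.map_cons, hc0 _ ((wheel n).mem_edgeSet.mpr h1),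
      hc0 _ ((wheel n).mem_edgeSet.mpr h2)] at hr
    simp at hr
  · rw [he] at hr
    simp only [List.map_cons, hc0 _ ((wheel n).mem_edgeSet.mpr h1),
      hc0 _ ((wheel n).mem_edgeSet.mpr h2)] at hr
    simp at hr

end lower

section lower2
variable {n : ℕ}

lemma not_Pw_two (hn : 7 ≤ n) : ¬ Pw n 2 := by
  haveI : NeZero n := ⟨by omega⟩
  intro hp
  obtain ⟨c, hc, hrc⟩ := hp (fun _ => ({0, 1} : Finset ℕ)) (fun e _ => by simp)
  have hc01 : ∀ e ∈ (wheel n).edgeSet, c e = 0 ∨ c e = 1 := by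
    intro e he
    have := hc e he
    simp only [Finset.mem_insert, Finset.mem_singleton] at this
    tauto
  set sc : Fin n → ℕ := fun i => c s(none, some i) with hsc
  have hsc01 : ∀ i, sc i = 0 ∨ sc i = 1 := fun i =>
    hc01 _ ((wheel n).mem_edgeSet.mpr (hub_adj (by omega) i))
  set emb : Fin 7 → Fin n := fun i => ⟨i.val, by omega⟩ with hemb
  have key : ∀ t : Fin 7 → Bool, ∃ i j : Fin 7,
      (i.val + 3 = j.val ∨ i.val + 4 = j.val) ∧ t i = t j := by
    set_option maxRecDepth 4000 in decide
  obtain ⟨i, j, hij, ht⟩ := key (fun i => decide (sc (emb i) = 0))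
  have hsame : sc (emb i) = sc (emb j) := by
    rcases hsc01 (emb i) with h | h <;> rcases hsc01 (emb j) with h' | h' <;>
      rw [h, h'] <;> simp only [h, h'] at ht <;> simp at ht
  set a : Fin n := emb i with hA0
  set b : Fin n := emb j with hB0
  have hav : a.val = i.val := rfl
  have hbv : b.val = j.val := rfl
  have hjle : j.val ≤ 6 := by omega
  have hab : a ≠ b := by
    simp only [ne_eq, Fin.ext_iff]; omega
  have hnadj : ¬ (cycleGraph n).Adj a b := by
    rw [cycAdj_iff (by omega)]
    rintro (h | h) <;> have hv := congrArg Fin.val h <;>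
      rcases succ_val_cases (n := n) (by omega) a with hA | hA <;>
      rcases succ_val_cases (n := n) (by omega) b with hB | hB <;> omega
  have hmid : ∀ x : Fin n, ¬ ((cycleGraph n).Adj a x ∧ (cycleGraph n).Adj x b) := by
    rintro x ⟨h1, h2⟩
    rw [cycAdj_iff (by omega)] at h1 h2
    rcases succ_val_cases (n := n) (by omega) a with hA | hA <;>
      rcases succ_val_cases (n := n) (by omega) b with hB | hB <;>
      rcases succ_val_cases (n := n) (by omega) x with hX | hX <;>
      rcases h1 with h1 | h1 <;> rcases h2 with h2 | h2 <;>
      have e1 := congrArg Fin.val h1 <;> have e2 := congrArg Fin.val h2 <;>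
      have hxlt := x.isLt <;> omega
  obtain ⟨p, hp', hr⟩ := hrc (some a) (some b)
  rcases walk_shape p with h | h | ⟨w, h1, h2, he⟩ | ⟨w, x, y, rest, h1, h2, h3, he⟩
  · exact hab (by simpa using h)
  · exact hnadj (adj_of_wheel h)
  · match w with
    | some x => exact hmid x ⟨adj_of_wheel h1, adj_of_wheel h2⟩
    | none =>
      rw [he] at hr
      have e1 : c s((some a : Option (Fin n)), none) = sc a := by
        rw [show s((some a : Option (Fin n)), none) = s(none, some a) from Sym2.eq_swap]
      rw [List.map_cons, List.map_cons, List.map_nil, e1] at hr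
      have : sc a ≠ sc b := by simpa using hr
      exact this hsame
  · rw [he] at hr
    have m1 := hc01 _ ((wheel n).mem_edgeSet.mpr h1)
    have m2 := hc01 _ ((wheel n).mem_edgeSet.mpr h2)
    have m3 := hc01 _ ((wheel n).mem_edgeSet.mpr h3)
    simp only [List.map_cons, List.nodup_cons, List.mem_cons, List.mem_map] at hr
    have d12 : c s((some a : Option (Fin n)), w) ≠ c s(w, x) := fun hh => hr.1 (Or.inl hh)
    have d13 : c s((some a : Option (Fin n)), w) ≠ c s(x, y) := fun hh => hr.1 (Or.inr (Or.inl hh))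
    have d23 : c s(w, x) ≠ c s(x, y) := fun hh => hr.2.1 (Or.inl hh)
    omega

end lower2

section upper
variable {n : ℕ}

lemma spoke_mem (hn : 1 ≤ n) (i : Fin n) :
    s((none : Option (Fin n)), some i) ∈ (wheel n).edgeSet :=
  (wheel n).mem_edgeSet.mpr (hub_adj hn i)

lemma rim_mem [NeZero n] (hn : 3 ≤ n) (i : Fin n) :
    s((some i : Option (Fin n)), some (i + 1)) ∈ (wheel n).edgeSet :=
  (wheel n).mem_edgeSet.mpr (rim_adj (cycAdj_succ hn i))

lemma Pw_three : Pw 3 1 := by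
  intro L hL
  have hn : (3 : ℕ) ≤ 3 := le_refl 3
  set σ : Fin 3 → ℕ := fun i => (pick1 (L s(none, some i)) (hL _ (spoke_mem (by omega) i))).choose
    with hσ
  set ρ : Fin 3 → ℕ :=
    fun i => (pick1 (L s(some i, some (i + 1))) (hL _ (rim_mem hn i))).choose with hρ
  refine ⟨mkc hn σ ρ, mkc_mem hn σ ρ L
    (fun i => (pick1 (L s(none, some i)) (hL _ (spoke_mem (by omega) i))).choose_spec)
    (fun i => (pick1 (L s(some i, some (i + 1))) (hL _ (rim_mem hn i))).choose_spec),
    rainbow_master hn σ ρ ?_⟩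
  intro a b hab hadj
  exact absurd (by revert hab; revert a b; decide : ∀ a b : Fin 3, a ≠ b → (cycleGraph 3).Adj a b)
    (by push_neg; exact ⟨a, b, hab, hadj⟩)

open Fin.NatCast in
lemma Pw_big (hn : 7 ≤ n) : Pw n 3 := by
  haveI : NeZero n := ⟨by omega⟩
  have hn3 : 3 ≤ n := by omega
  intro L hL
  set Ls : Fin n → Finset ℕ := fun i => L s(none, some i) with hLsdef
  have hLs : ∀ i, 3 ≤ (Ls i).card := fun i => hL _ (spoke_mem (by omega) i)
  set Lr : Fin n → Finset ℕ := fun i => L s(some i, some (i + 1)) with hLrdef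
  have hLr : ∀ i, 3 ≤ (Lr i).card := fun i => hL _ (rim_mem hn3 i)
  obtain ⟨a0, ha0⟩ := pick1 (Ls 0) (by have := hLs 0; omega)
  set g : ℕ → ℕ := fun k => Nat.rec a0
    (fun k ih => (pick3 (Ls (((k + 1 : ℕ) : Fin n))) (hLs _) ih a0).choose) k with hgdef
  have hgs : ∀ k, g (k + 1) ∈ Ls (((k + 1 : ℕ) : Fin n)) ∧ g (k + 1) ≠ g k ∧ g (k + 1) ≠ a0 :=
    fun k => (pick3 (Ls (((k + 1 : ℕ) : Fin n))) (hLs _) (g k) a0).choose_spec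
  set σ : Fin n → ℕ := fun i => g i.val with hσdef
  have hσmem : ∀ i, σ i ∈ Ls i := by
    intro i
    cases h : i.val with
    | zero =>
      have hi : i = 0 := Fin.ext (by rw [h, Fin.val_zero])
      rw [hσdef]; simp only [h]
      rw [hi]
      exact ha0
    | succ k =>
      have hik : i = ((k + 1 : ℕ) : Fin n) := by rw [← h, Fin.cast_val_eq_self]
      rw [hσdef]; simp only [h]
      rw [hik]
      exact (hgs k).1
  have hσsucc : ∀ i : Fin n, σ (i + 1) ≠ σ i := by
    intro i
    rcases succ_val_cases hn3 i with ⟨h1, h2⟩ | ⟨h1, h2⟩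
    · rw [hσdef]; simp only [h1]
      exact (hgs i.val).2.1
    · rw [hσdef]; simp only [h1, h2]
      have hn2 : n - 1 = (n - 2) + 1 := by omega
      rw [hn2]
      exact fun hh => (hgs (n - 2)).2.2 hh.symm
  set ρ : Fin n → ℕ := fun i => (pick3 (Lr i) (hLr i) (σ i) (σ (i + 1))).choose with hρdef
  have hρ : ∀ i, ρ i ∈ Lr i ∧ ρ i ≠ σ i ∧ ρ i ≠ σ (i + 1) :=
    fun i => (pick3 (Lr i) (hLr i) (σ i) (σ (i + 1))).choose_spec
  refine ⟨mkc hn3 σ ρ, mkc_mem hn3 σ ρ L hσmem (fun i => (hρ i).1),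
    rainbow_master hn3 σ ρ ?_⟩
  intro a b hab hadj
  by_cases hss : σ a = σ b
  · exact Or.inr (Or.inr (Or.inr ⟨hss, (hρ a).2.1, (hρ a).2.2, hσsucc a⟩))
  · exact Or.inl hss

end upper

section small

lemma Pw_four : Pw 4 2 := by
  intro L hL
  have hn : (3:ℕ) ≤ 4 := by omega
  obtain ⟨r0, hr0⟩ := pick1 (L s(some 0, some (0 + 1))) (by have := hL _ (rim_mem (n := 4) hn 0); omega)
  obtain ⟨r1, hr1, hr10⟩ := pick2 (L s(some 1, some (1 + 1))) (hL _ (rim_mem (n := 4) hn 1)) r0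
  obtain ⟨r2, hr2, hr21⟩ := pick2 (L s(some 2, some (2 + 1))) (hL _ (rim_mem (n := 4) hn 2)) r1
  obtain ⟨r3, hr3⟩ := pick1 (L s(some 3, some (3 + 1))) (by have := hL _ (rim_mem (n := 4) hn 3); omega)
  set σ : Fin 4 → ℕ := fun i => (pick1 (L s(none, some i))
    (by have := hL _ (spoke_mem (by omega) i); omega)).choose with hσdef
  set ρ : Fin 4 → ℕ := fun i => [r0, r1, r2, r3].get i with hρdef
  have hd01 : ρ 0 ≠ ρ (0 + 1) := fun h => hr10 h.symm
  have hd12 : ρ 1 ≠ ρ (1 + 1) := fun h => hr21 h.symm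
  refine ⟨mkc hn σ ρ, mkc_mem hn σ ρ L
    (fun i => (pick1 (L s(none, some i)) (by have := hL _ (spoke_mem (by omega) i); omega)).choose_spec)
    ?_, rainbow_master hn σ ρ ?_⟩
  · intro i
    fin_cases i
    · exact hr0
    · exact hr1
    · exact hr2
    · exact hr3
  · intro a b hab hadj
    fin_cases a <;> fin_cases b <;>
      first
        | exact absurd rfl hab
        | exact absurd (by decide) hadj
        | exact Or.inr (Or.inl ⟨by decide, hd01⟩)
        | exact Or.inr (Or.inr (Or.inl ⟨by decide, hd01⟩))
        | exact Or.inr (Or.inl ⟨by decide, hd12⟩)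
        | exact Or.inr (Or.inr (Or.inl ⟨by decide, hd12⟩))

end small

section small2

lemma Pw_five : Pw 5 2 := by
  intro L hL
  have hn : (3:ℕ) ≤ 5 := by omega
  obtain ⟨r0, hr0⟩ := pick1 (L s(some 0, some (0 + 1)))
    (by have := hL _ (rim_mem (n := 5) hn 0); omega)
  obtain ⟨r1, hr1, hr10⟩ := pick2 (L s(some 1, some (1 + 1))) (hL _ (rim_mem (n := 5) hn 1)) r0
  obtain ⟨r2, hr2, hr21⟩ := pick2 (L s(some 2, some (2 + 1))) (hL _ (rim_mem (n := 5) hn 2)) r1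
  obtain ⟨r3, hr3, hr32⟩ := pick2 (L s(some 3, some (3 + 1))) (hL _ (rim_mem (n := 5) hn 3)) r2
  obtain ⟨r4, hr4, hr43⟩ := pick2 (L s(some 4, some (4 + 1))) (hL _ (rim_mem (n := 5) hn 4)) r3
  obtain ⟨s0, hs0⟩ := pick1 (L s(none, some 0)) (by have := hL _ (spoke_mem (by omega) 0); omega)
  obtain ⟨s1, hs1⟩ := pick1 (L s(none, some 1)) (by have := hL _ (spoke_mem (by omega) 1); omega)
  obtain ⟨s2, hs2⟩ := pick1 (L s(none, some 2)) (by have := hL _ (spoke_mem (by omega) 2); omega)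
  obtain ⟨s3, hs3⟩ := pick1 (L s(none, some 3)) (by have := hL _ (spoke_mem (by omega) 3); omega)
  obtain ⟨s4, hs4, hs41⟩ := pick2 (L s(none, some 4)) (hL _ (spoke_mem (by omega) 4)) s1
  set σ : Fin 5 → ℕ := fun i => [s0, s1, s2, s3, s4].get i with hσdef
  set ρ : Fin 5 → ℕ := fun i => [r0, r1, r2, r3, r4].get i with hρdef
  have hd01 : ρ 0 ≠ ρ (0 + 1) := fun h => hr10 h.symm
  have hd12 : ρ 1 ≠ ρ (1 + 1) := fun h => hr21 h.symm
  have hd23 : ρ 2 ≠ ρ (2 + 1) := fun h => hr32 h.symm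
  have hd34 : ρ 3 ≠ ρ (3 + 1) := fun h => hr43 h.symm
  have h41 : σ 4 ≠ σ 1 := hs41
  refine ⟨mkc hn σ ρ, mkc_mem hn σ ρ L ?_ ?_, rainbow_master hn σ ρ ?_⟩
  · intro i
    fin_cases i
    exacts [hs0, hs1, hs2, hs3, hs4]
  · intro i
    fin_cases i
    exacts [hr0, hr1, hr2, hr3, hr4]
  · intro a b hab hadj
    fin_cases a <;> fin_cases b <;>
      first
        | exact absurd rfl hab
        | exact absurd (by decide) hadj
        | exact Or.inl h41
        | exact Or.inl (Ne.symm h41)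
        | exact Or.inr (Or.inl ⟨by decide, hd01⟩)
        | exact Or.inr (Or.inr (Or.inl ⟨by decide, hd01⟩))
        | exact Or.inr (Or.inl ⟨by decide, hd12⟩)
        | exact Or.inr (Or.inr (Or.inl ⟨by decide, hd12⟩))
        | exact Or.inr (Or.inl ⟨by decide, hd23⟩)
        | exact Or.inr (Or.inr (Or.inl ⟨by decide, hd23⟩))
        | exact Or.inr (Or.inl ⟨by decide, hd34⟩)
        | exact Or.inr (Or.inr (Or.inl ⟨by decide, hd34⟩))

lemma Pw_six : Pw 6 2 := by
  intro L hL
  have hn : (3:ℕ) ≤ 6 := by omega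
  obtain ⟨r0, hr0⟩ := pick1 (L s(some 0, some (0 + 1)))
    (by have := hL _ (rim_mem (n := 6) hn 0); omega)
  obtain ⟨r1, hr1, hr10⟩ := pick2 (L s(some 1, some (1 + 1))) (hL _ (rim_mem (n := 6) hn 1)) r0
  obtain ⟨r2, hr2, hr21⟩ := pick2 (L s(some 2, some (2 + 1))) (hL _ (rim_mem (n := 6) hn 2)) r1
  obtain ⟨r3, hr3, hr32⟩ := pick2 (L s(some 3, some (3 + 1))) (hL _ (rim_mem (n := 6) hn 3)) r2
  obtain ⟨r4, hr4, hr43⟩ := pick2 (L s(some 4, some (4 + 1))) (hL _ (rim_mem (n := 6) hn 4)) r3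
  obtain ⟨r5, hr5, hr54⟩ := pick2 (L s(some 5, some (5 + 1))) (hL _ (rim_mem (n := 6) hn 5)) r4
  obtain ⟨s0, hs0⟩ := pick1 (L s(none, some 0)) (by have := hL _ (spoke_mem (by omega) 0); omega)
  obtain ⟨s3, hs3, hs30⟩ := pick2 (L s(none, some 3)) (hL _ (spoke_mem (by omega) 3)) s0
  obtain ⟨s4, hs4⟩ := pick1 (L s(none, some 4)) (by have := hL _ (spoke_mem (by omega) 4); omega)
  obtain ⟨s1, hs1, hs14⟩ := pick2 (L s(none, some 1)) (hL _ (spoke_mem (by omega) 1)) s4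
  obtain ⟨s5, hs5, hs51⟩ := pick2 (L s(none, some 5)) (hL _ (spoke_mem (by omega) 5)) s1
  obtain ⟨s2, hs2, hs25⟩ := pick2 (L s(none, some 2)) (hL _ (spoke_mem (by omega) 2)) s5
  set σ : Fin 6 → ℕ := fun i => [s0, s1, s2, s3, s4, s5].get i with hσdef
  set ρ : Fin 6 → ℕ := fun i => [r0, r1, r2, r3, r4, r5].get i with hρdef
  have hd01 : ρ 0 ≠ ρ (0 + 1) := fun h => hr10 h.symm
  have hd12 : ρ 1 ≠ ρ (1 + 1) := fun h => hr21 h.symm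
  have hd23 : ρ 2 ≠ ρ (2 + 1) := fun h => hr32 h.symm
  have hd34 : ρ 3 ≠ ρ (3 + 1) := fun h => hr43 h.symm
  have hd45 : ρ 4 ≠ ρ (4 + 1) := fun h => hr54 h.symm
  have h30 : σ 3 ≠ σ 0 := hs30
  have h14 : σ 1 ≠ σ 4 := hs14
  have h51 : σ 5 ≠ σ 1 := hs51
  have h25 : σ 2 ≠ σ 5 := hs25
  refine ⟨mkc hn σ ρ, mkc_mem hn σ ρ L ?_ ?_, rainbow_master hn σ ρ ?_⟩
  · intro i
    fin_cases i
    exacts [hs0, hs1, hs2, hs3, hs4, hs5]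
  · intro i
    fin_cases i
    exacts [hr0, hr1, hr2, hr3, hr4, hr5]
  · intro a b hab hadj
    fin_cases a <;> fin_cases b <;>
      first
        | exact absurd rfl hab
        | exact absurd (by decide) hadj
        | exact Or.inl h30
        | exact Or.inl (Ne.symm h30)
        | exact Or.inl h14
        | exact Or.inl (Ne.symm h14)
        | exact Or.inl h51
        | exact Or.inl (Ne.symm h51)
        | exact Or.inl h25
        | exact Or.inl (Ne.symm h25)
        | exact Or.inr (Or.inl ⟨by decide, hd01⟩)
        | exact Or.inr (Or.inr (Or.inl ⟨by decide, hd01⟩))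
        | exact Or.inr (Or.inl ⟨by decide, hd12⟩)
        | exact Or.inr (Or.inr (Or.inl ⟨by decide, hd12⟩))
        | exact Or.inr (Or.inl ⟨by decide, hd23⟩)
        | exact Or.inr (Or.inr (Or.inl ⟨by decide, hd23⟩))
        | exact Or.inr (Or.inl ⟨by decide, hd34⟩)
        | exact Or.inr (Or.inr (Or.inl ⟨by decide, hd34⟩))
        | exact Or.inr (Or.inl ⟨by decide, hd45⟩)
        | exact Or.inr (Or.inr (Or.inl ⟨by decide, hd45⟩))

end small2


/-- Theorem: for `n ≥ 3`, `rc^ℓ(W_n)` is `1` for `n = 3`, `2` for `4 ≤ n ≤ 6`, and `3`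
for `n ≥ 7`. -/
theorem stmt11 (n : ℕ) (hn : 3 ≤ n) :
    rcl (wheel n) = if n = 3 then 1 else if n ≤ 6 then 2 else 3 := by
  rcases eq_or_ne n 3 with rfl | h3
  · rw [if_pos rfl]
    exact rcl_wheel_eq (by omega) Pw_three (not_Pw_zero (by omega))
  · rw [if_neg h3]
    by_cases h6 : n ≤ 6
    · rw [if_pos h6]
      have h456 : n = 4 ∨ n = 5 ∨ n = 6 := by omega
      rcases h456 with rfl | rfl | rfl
      · exact rcl_wheel_eq (by omega) Pw_four (not_Pw_one (by omega))
      · exact rcl_wheel_eq (by omega) Pw_five (not_Pw_one (by omega))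
      · exact rcl_wheel_eq (by omega) Pw_six (not_Pw_one (by omega))
    · rw [if_neg h6]
      exact rcl_wheel_eq (by omega) (Pw_big (by omega)) (not_Pw_two (by omega))
end
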